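/- arXiv:1805.04804 — 6 statements merged into one kernel-verified Lean document; each statement's English description precedes it below -/
import Mathlib

section
/- (Maximum principle on a moving domain) Let d > 0, h0 > 0, T > 0. Let g, h : [0,T] → ℝ be continuous with h(0) = h0, g(0) = −h0, inf_{0≤t1<t2≤T} (h(t2)−h(t1))/(t2−t1) > 0 and sup_{0≤t1<t2≤T} (g(t2)−g(t1))/(t2−t1) < 0. Let Ω = {(t,x) : 0 < t ≤ T, g(t) < x < h(t)}. Suppose u and ∂ₜu are continuous on the closure of Ω, c is a bounded (measurable) function on Ω, and: ∂ₜu(t,x) ≥ d∫_{g(t)}^{h(t)} J(x−y) u(t,y) dy − d·u(t,x) + c(t,x)·u(t,x) for all 0 < t ≤ T and g(t) < x < h(t); u(t,g(t)) ≥ 0 and u(t,h(t)) ≥ 0 for 0 < t ≤ T; and u(0,x) ≥ 0 for x ∈ [−h0, h0]. Then u(t,x) ≥ 0 for all 0 ≤ t ≤ T and x ∈ [g(t), h(t)]. Moreover, if u(0,·) is not identically zero on [−h0, h0], then u(t,x) > 0 for all 0 < t ≤ T and g(t) < x < h(t). -/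
/-!
Nonnegativity: if `u` takes negative values, `e^{-(C+1) t} u` (with `C ≥ c`) has a negative
minimum on the compact set `Ω̄ = {0 ≤ t ≤ T, g t ≤ x ≤ h t}`, which by the boundary and initial
conditions lies at a point `(t₀, x₀)` of the open domain. The segment `{x₀} × (t₀ - ε, t₀]`
stays in `Ω̄`, so `∂ₜu ≤ (C+1) u` there; and `u(t₀, ·) ≥ u(t₀, x₀)` together with `∫ J ≤ 1`
gives `d ∫ J u - d u ≥ 0`, so the inequality yields `∂ₜu ≥ C u > (C+1) u`.

Positivity: with `u ≥ 0` and `c ≥ -C`, `e^{(d+C) t} u(t, x)` is nondecreasing in `t` as long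
as `x` stays in the domain. Hence a zero at an interior point persists backwards in time,
so `∂ₜu = 0` there, and the inequality forces `∫ J (x - y) u(t, y) dy = 0`: `u(t, ·)` vanishes
near `x` because `J > 0` near `0`. By connectedness `u(t, ·) ≡ 0`, and since the domain grows
in time this propagates back to `u(0, ·) ≡ 0`.
-/

open MeasureTheory Set Filter Topology

lemma HasDerivAt.nonpos_of_eventually_le_left {φ : ℝ → ℝ} {φ' t : ℝ} (hφ : HasDerivAt φ φ' t)
    (hle : ∀ᶠ r in 𝓝[<] t, φ t ≤ φ r) : φ' ≤ 0 := by
  have hslope : Tendsto (slope φ t) (𝓝[<] t) (𝓝 φ') :=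
    (hasDerivAt_iff_tendsto_slope.1 hφ).mono_left (nhdsWithin_mono _ fun r hr => ne_of_lt hr)
  refine le_of_tendsto hslope ?_
  filter_upwards [hle, self_mem_nhdsWithin] with r hr hrt
  rw [slope_def_field]
  exact div_nonpos_of_nonneg_of_nonpos (sub_nonneg.2 hr) (sub_nonpos.2 (le_of_lt hrt))

lemma monotoneOn_Icc_of_slope_nonneg {f : ℝ → ℝ} {a b : ℝ}
    (hf : ∀ t₁ t₂, a ≤ t₁ → t₁ < t₂ → t₂ ≤ b → 0 ≤ (f t₂ - f t₁) / (t₂ - t₁)) :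
    MonotoneOn f (Icc a b) := by
  intro t₁ ht₁ t₂ ht₂ hle
  rcases hle.eq_or_lt with rfl | hlt
  · rfl
  · have := hf t₁ t₂ ht₁.1 hlt ht₂.2
    rwa [le_div_iff₀ (sub_pos.2 hlt), zero_mul, sub_nonneg] at this

lemma antitoneOn_Icc_of_slope_nonpos {f : ℝ → ℝ} {a b : ℝ}
    (hf : ∀ t₁ t₂, a ≤ t₁ → t₁ < t₂ → t₂ ≤ b → (f t₂ - f t₁) / (t₂ - t₁) ≤ 0) :
    AntitoneOn f (Icc a b) := by
  intro t₁ ht₁ t₂ ht₂ hle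
  rcases hle.eq_or_lt with rfl | hlt
  · rfl
  · have := hf t₁ t₂ ht₁.1 hlt ht₂.2
    rwa [div_le_iff₀ (sub_pos.2 hlt), zero_mul, sub_nonpos] at this

lemma le_intervalIntegral_kernel_mul {J f : ℝ → ℝ} (hJnn : ∀ x, 0 ≤ J x) (hJint : Integrable J)
    (hJ1 : ∫ x, J x ≤ 1) {a b x m : ℝ} (hab : a ≤ b) (hf : ContinuousOn f (Icc a b))
    (hm : m ≤ 0) (hmf : ∀ y ∈ Icc a b, m ≤ f y) :
    m ≤ ∫ y in a..b, J (x - y) * f y := by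
  have hJx : IntervalIntegrable (fun y => J (x - y)) volume a b :=
    (hJint.comp_sub_left x).intervalIntegrable
  have hmass : ∫ y in a..b, J (x - y) ≤ 1 := by
    rw [intervalIntegral.integral_comp_sub_left J x,
      intervalIntegral.integral_of_le (by linarith)]
    exact (setIntegral_le_integral hJint (ae_of_all _ hJnn)).trans hJ1
  have hmass₀ : 0 ≤ ∫ y in a..b, J (x - y) :=
    intervalIntegral.integral_nonneg hab fun y _ => hJnn (x - y)
  calc m ≤ (∫ y in a..b, J (x - y)) * m := by nlinarith
    _ = ∫ y in a..b, J (x - y) * m := (intervalIntegral.integral_mul_const _ _).symm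
    _ ≤ ∫ y in a..b, J (x - y) * f y :=
      intervalIntegral.integral_mono_on hab (hJx.mul_continuousOn continuousOn_const)
        (hJx.mul_continuousOn (by rwa [uIcc_of_le hab]))
        fun y hy => mul_le_mul_of_nonneg_left (hmf y hy) (hJnn _)

lemma eqOn_zero_of_intervalIntegral_eq_zero {f : ℝ → ℝ} {a b : ℝ} (hab : a ≤ b)
    (hf : ContinuousOn f (Icc a b)) (hf₀ : ∀ x ∈ Icc a b, 0 ≤ f x)
    (hint : ∫ x in a..b, f x = 0) : EqOn f 0 (Ioo a b) := by
  have hae : f =ᵐ[volume.restrict (Ioc a b)] 0 :=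
    (intervalIntegral.integral_eq_zero_iff_of_le_of_nonneg_ae hab
      (ae_restrict_of_forall_mem measurableSet_Ioc fun x hx => hf₀ x (Ioc_subset_Icc_self hx))
      (hf.intervalIntegrable_of_Icc hab)).1 hint
  exact Measure.eqOn_open_of_ae_eq (ae_restrict_of_ae_restrict_of_subset Ioo_subset_Ioc_self hae)
    isOpen_Ioo (hf.mono Ioo_subset_Icc_self) continuousOn_const

lemma IsPreconnected.forall_eq_of_eventually_eq {X Y : Type*} [TopologicalSpace X]
    [TopologicalSpace Y] [T1Space Y] {s : Set X} (hs : IsPreconnected s) {f : X → Y} {y₀ : Y}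
    (hf : ContinuousOn f s) (hloc : ∀ x ∈ s, f x = y₀ → ∀ᶠ y in 𝓝[s] x, f y = y₀)
    {x₀ : X} (hx₀ : x₀ ∈ s) (h₀ : f x₀ = y₀) : ∀ x ∈ s, f x = y₀ := by
  intro x hx
  refine (hs.induction₂ (fun a b => f a = y₀ ↔ f b = y₀) (fun a ha => ?_)
    (fun _ _ _ _ _ _ => Iff.trans) (fun _ _ _ _ => Iff.symm) hx₀ hx).1 h₀
  by_cases hfa : f a = y₀
  · filter_upwards [hloc a ha hfa] with b hb
    simp [hfa, hb]
  · filter_upwards [(hf a ha).eventually_ne hfa] with b hb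
    simp [hfa, hb]

def movingRegion (g h : ℝ → ℝ) (T : ℝ) : Set (ℝ × ℝ) :=
  {p | 0 ≤ p.1 ∧ p.1 ≤ T ∧ g p.1 ≤ p.2 ∧ p.2 ≤ h p.1}

lemma isCompact_movingRegion {g h : ℝ → ℝ} {T : ℝ} (hg : ContinuousOn g (Icc 0 T))
    (hh : ContinuousOn h (Icc 0 T)) : IsCompact (movingRegion g h T) := by
  have hstrip : IsClosed (Icc 0 T ×ˢ (univ : Set ℝ)) := isClosed_Icc.prod isClosed_univ
  have hg' : ContinuousOn (fun p : ℝ × ℝ => g p.1) (Icc 0 T ×ˢ univ) :=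
    hg.comp continuousOn_fst fun p hp => hp.1
  have hh' : ContinuousOn (fun p : ℝ × ℝ => h p.1) (Icc 0 T ×ˢ univ) :=
    hh.comp continuousOn_fst fun p hp => hp.1
  have hclosed : IsClosed (movingRegion g h T) := by
    have := (hstrip.isClosed_le hg' continuousOn_snd).isClosed_le continuousOn_snd
      (hh'.mono fun p hp => hp.1)
    convert this using 1
    ext p
    simp [movingRegion, and_assoc]
  obtain ⟨m, hm⟩ := isCompact_Icc.bddBelow_image hg
  obtain ⟨M, hM⟩ := isCompact_Icc.bddAbove_image hh
  refine ((isCompact_Icc (a := 0) (b := T)).prod (isCompact_Icc (a := m) (b := M)))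
    |>.of_isClosed_subset hclosed ?_
  rintro ⟨t, x⟩ ⟨ht, htT, hgx, hxh⟩
  exact ⟨⟨ht, htT⟩, (hm ⟨t, ⟨ht, htT⟩, rfl⟩).trans hgx, hxh.trans (hM ⟨t, ⟨ht, htT⟩, rfl⟩)⟩

lemma exists_Ioc_forall_mem_Ioo {g h : ℝ → ℝ} {T s x : ℝ} (hg : ContinuousOn g (Icc 0 T))
    (hh : ContinuousOn h (Icc 0 T)) (hs : 0 < s) (hsT : s ≤ T) (hx : x ∈ Ioo (g s) (h s)) :
    ∃ a ∈ Ico 0 s, ∀ r ∈ Ioc a s, x ∈ Ioo (g r) (h r) := by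
  have hle : 𝓝[<] s ≤ 𝓝[Icc 0 T] s := by
    rw [← nhdsWithin_Ioo_eq_nhdsLT hs]
    exact nhdsWithin_mono _ (Ioo_subset_Icc_self.trans (Icc_subset_Icc_right hsT))
  have hev : ∀ᶠ r in 𝓝[<] s, x ∈ Ioo (g r) (h r) :=
    (((hg s ⟨hs.le, hsT⟩).mono_left hle).eventually_lt_const hx.1).and
      (((hh s ⟨hs.le, hsT⟩).mono_left hle).eventually_const_lt hx.2)
  obtain ⟨a, ha, hsub⟩ := (mem_nhdsLT_iff_exists_mem_Ico_Ioo_subset hs).1 hev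
  refine ⟨a, ha, fun r hr => ?_⟩
  rcases hr.2.eq_or_lt with rfl | hrs
  · exact hx
  · exact hsub ⟨hr.1, hrs⟩

structure IsNonlocalSupersolution (J : ℝ → ℝ) (d T : ℝ) (g h : ℝ → ℝ) (u ut c : ℝ → ℝ → ℝ) :
    Prop where
  continuousOn : ContinuousOn (fun p : ℝ × ℝ => u p.1 p.2) (movingRegion g h T)
  hasDerivAt : ∀ t x, 0 < t → t ≤ T → g t < x → x < h t →
    HasDerivAt (fun s => u s x) (ut t x) t
  le_deriv : ∀ t x, 0 < t → t ≤ T → g t < x → x < h t →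
    d * (∫ y in g t..h t, J (x - y) * u t y) - d * u t x + c t x * u t x ≤ ut t x

namespace IsNonlocalSupersolution

variable {J : ℝ → ℝ} {d T : ℝ} {g h : ℝ → ℝ} {u ut c : ℝ → ℝ → ℝ}

lemma continuousOn_slice (hu : IsNonlocalSupersolution J d T g h u ut c) {t : ℝ} (ht : 0 ≤ t)
    (htT : t ≤ T) : ContinuousOn (u t) (Icc (g t) (h t)) :=
  hu.continuousOn.comp (Continuous.prodMk_right t).continuousOn
    fun _ hy => ⟨ht, htT, hy.1, hy.2⟩

theorem nonneg (hu : IsNonlocalSupersolution J d T g h u ut c) (hJnn : ∀ x, 0 ≤ J x)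
    (hJint : Integrable J) (hJ1 : ∫ x, J x ≤ 1) (hd : 0 ≤ d)
    (hg : ContinuousOn g (Icc 0 T)) (hh : ContinuousOn h (Icc 0 T)) {C : ℝ}
    (hcC : ∀ t x, 0 < t → t ≤ T → g t < x → x < h t → c t x ≤ C)
    (hbdry : ∀ t, 0 < t → t ≤ T → 0 ≤ u t (g t) ∧ 0 ≤ u t (h t))
    (hinit : ∀ x ∈ Icc (g 0) (h 0), 0 ≤ u 0 x) :
    ∀ p ∈ movingRegion g h T, 0 ≤ u p.1 p.2 := by
  by_contra! ⟨q, hq, hqneg⟩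
  set k := C + 1
  have hv : ContinuousOn (fun p : ℝ × ℝ => Real.exp (-k * p.1) * u p.1 p.2)
      (movingRegion g h T) :=
    (by fun_prop : Continuous fun p : ℝ × ℝ => Real.exp (-k * p.1)).continuousOn.mul
      hu.continuousOn
  obtain ⟨⟨t₀, x₀⟩, hp, hmin⟩ := (isCompact_movingRegion hg hh).exists_isMinOn ⟨q, hq⟩ hv
  replace hmin := isMinOn_iff.1 hmin
  obtain ⟨ht₀0, ht₀T, hgx, hxh⟩ : 0 ≤ t₀ ∧ t₀ ≤ T ∧ g t₀ ≤ x₀ ∧ x₀ ≤ h t₀ := hp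
  have hneg : u t₀ x₀ < 0 := by
    have := hmin q hq
    nlinarith [Real.exp_pos (-k * t₀), Real.exp_pos (-k * q.1)]
  have ht₀ : 0 < t₀ := ht₀0.lt_of_ne fun h0 => by
    subst h0; linarith [hinit x₀ ⟨hgx, hxh⟩]
  have hgx' : g t₀ < x₀ := hgx.lt_of_ne fun hx => by
    linarith [hx ▸ (hbdry t₀ ht₀ ht₀T).1]
  have hxh' : x₀ < h t₀ := hxh.lt_of_ne fun hx => by
    linarith [hx ▸ (hbdry t₀ ht₀ ht₀T).2]
  have hut : ut t₀ x₀ ≤ k * u t₀ x₀ := by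
    obtain ⟨a, ha, hseg⟩ := exists_Ioc_forall_mem_Ioo hg hh ht₀ ht₀T ⟨hgx', hxh'⟩
    have hder := (((hasDerivAt_id t₀).const_mul (-k)).exp.mul
      (hu.hasDerivAt t₀ x₀ ht₀ ht₀T hgx' hxh'))
    have := hder.nonpos_of_eventually_le_left (by
      filter_upwards [Ioo_mem_nhdsLT ha.2] with r hr
      have hr' := hseg r ⟨hr.1, hr.2.le⟩
      exact hmin (r, x₀) ⟨ha.1.trans hr.1.le, hr.2.le.trans ht₀T, hr'.1.le, hr'.2.le⟩)
    simp only [id, mul_one] at this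
    nlinarith [Real.exp_pos (-k * t₀)]
  have hint : u t₀ x₀ ≤ ∫ y in g t₀..h t₀, J (x₀ - y) * u t₀ y :=
    le_intervalIntegral_kernel_mul hJnn hJint hJ1 (hgx.trans hxh)
      (hu.continuousOn_slice ht₀0 ht₀T) hneg.le fun y hy =>
        le_of_mul_le_mul_left (hmin (t₀, y) ⟨ht₀0, ht₀T, hy.1, hy.2⟩) (Real.exp_pos _)
  have hle := hu.le_deriv t₀ x₀ ht₀ ht₀T hgx' hxh'
  have hcu := mul_le_mul_of_nonpos_right (hcC t₀ x₀ ht₀ ht₀T hgx' hxh') hneg.le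
  nlinarith

lemma monotoneOn_exp_mul (hu : IsNonlocalSupersolution J d T g h u ut c) (hJnn : ∀ x, 0 ≤ J x)
    (hd : 0 ≤ d) (hnonneg : ∀ p ∈ movingRegion g h T, 0 ≤ u p.1 p.2) {C : ℝ}
    (hcC : ∀ t x, 0 < t → t ≤ T → g t < x → x < h t → -C ≤ c t x) {a b x : ℝ}
    (hax : (a, x) ∈ movingRegion g h T) (hbT : b ≤ T)
    (hseg : ∀ r ∈ Ioc a b, x ∈ Ioo (g r) (h r)) :
    MonotoneOn (fun r => Real.exp ((d + C) * r) * u r x) (Icc a b) := by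
  have hmem : ∀ r ∈ Icc a b, (r, x) ∈ movingRegion g h T := by
    intro r hr
    rcases hr.1.eq_or_lt with rfl | har
    · exact hax
    · exact ⟨hax.1.trans har.le, hr.2.trans hbT, (hseg r ⟨har, hr.2⟩).1.le,
        (hseg r ⟨har, hr.2⟩).2.le⟩
  have hpos : ∀ r ∈ Ioo a b, 0 < r ∧ r ≤ T ∧ g r < x ∧ x < h r := fun r hr =>
    ⟨hax.1.trans_lt hr.1, hr.2.le.trans hbT, (hseg r ⟨hr.1, hr.2.le⟩).1,
      (hseg r ⟨hr.1, hr.2.le⟩).2⟩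
  have hder : ∀ r ∈ Ioo a b, HasDerivAt (fun r => Real.exp ((d + C) * r) * u r x)
      (Real.exp ((d + C) * r) * ((d + C) * u r x + ut r x)) r := by
    intro r hr
    obtain ⟨hr0, hrT, hgx, hxh⟩ := hpos r hr
    exact (((hasDerivAt_id r).const_mul (d + C)).exp.mul
      (hu.hasDerivAt r x hr0 hrT hgx hxh)).congr_deriv (by simp only [id, mul_one]; ring)
  rw [← interior_Icc] at hpos hder
  refine monotoneOn_of_hasDerivWithinAt_nonneg (convex_Icc a b)
    ((by fun_prop : Continuous fun r => Real.exp ((d + C) * r)).continuousOn.mul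
      (hu.continuousOn.comp (Continuous.prodMk_left x).continuousOn hmem))
    (fun r hr => (hder r hr).hasDerivWithinAt) ?_
  intro r hr
  obtain ⟨hr0, hrT, hgx, hxh⟩ := hpos r hr
  have hint : 0 ≤ ∫ y in g r..h r, J (x - y) * u r y :=
    intervalIntegral.integral_nonneg (hgx.trans hxh).le fun y hy =>
      mul_nonneg (hJnn _) (hnonneg (r, y) ⟨hr0.le, hrT, hy.1, hy.2⟩)
  have hle := hu.le_deriv r x hr0 hrT hgx hxh
  have hcu := mul_nonneg (neg_le_iff_add_nonneg.1 (hcC r x hr0 hrT hgx hxh))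
    (hnonneg (r, x) (hmem r (interior_subset hr)))
  exact mul_nonneg (Real.exp_pos _).le (by nlinarith [mul_nonneg hd hint])

lemma eq_zero_of_eq_zero_of_le (hu : IsNonlocalSupersolution J d T g h u ut c)
    (hJnn : ∀ x, 0 ≤ J x) (hd : 0 ≤ d) (hnonneg : ∀ p ∈ movingRegion g h T, 0 ≤ u p.1 p.2)
    {C : ℝ} (hcC : ∀ t x, 0 < t → t ≤ T → g t < x → x < h t → -C ≤ c t x) {a b x : ℝ}
    (hax : (a, x) ∈ movingRegion g h T) (hbT : b ≤ T)
    (hseg : ∀ r ∈ Ioc a b, x ∈ Ioo (g r) (h r)) (hab : a ≤ b) (hzero : u b x = 0) :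
    u a x = 0 := by
  have := hu.monotoneOn_exp_mul hJnn hd hnonneg hcC hax hbT hseg (left_mem_Icc.2 hab)
    (right_mem_Icc.2 hab) hab
  simp only [hzero, mul_zero] at this
  exact le_antisymm (nonpos_of_mul_nonpos_right this (Real.exp_pos _)) (hnonneg _ hax)

lemma deriv_eq_zero_of_eq_zero (hu : IsNonlocalSupersolution J d T g h u ut c)
    (hJnn : ∀ x, 0 ≤ J x) (hd : 0 ≤ d) (hg : ContinuousOn g (Icc 0 T))
    (hh : ContinuousOn h (Icc 0 T)) (hnonneg : ∀ p ∈ movingRegion g h T, 0 ≤ u p.1 p.2)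
    {C : ℝ} (hcC : ∀ t x, 0 < t → t ≤ T → g t < x → x < h t → -C ≤ c t x) {s x : ℝ}
    (hs : 0 < s) (hsT : s ≤ T) (hx : x ∈ Ioo (g s) (h s)) (hzero : u s x = 0) :
    ut s x = 0 := by
  obtain ⟨a, ha, hseg⟩ := exists_Ioc_forall_mem_Ioo hg hh hs hsT hx
  have hleft : ∀ᶠ r in 𝓝[<] s, u r x = 0 := by
    filter_upwards [Ioo_mem_nhdsLT ha.2] with r hr
    have hrx := hseg r ⟨hr.1, hr.2.le⟩
    exact hu.eq_zero_of_eq_zero_of_le hJnn hd hnonneg hcC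
      ⟨ha.1.trans hr.1.le, hr.2.le.trans hsT, hrx.1.le, hrx.2.le⟩ hsT
      (fun ρ hρ => hseg ρ ⟨hr.1.trans hρ.1, hρ.2⟩) hr.2.le hzero
  have hder := hu.hasDerivAt s x hs hsT hx.1 hx.2
  refine le_antisymm (hder.nonpos_of_eventually_le_left ?_) ?_
  · filter_upwards [hleft] with r hr
    rw [hr, hzero]
  · refine neg_nonpos.1 (hder.neg.nonpos_of_eventually_le_left ?_)
    filter_upwards [hleft] with r hr
    simp [hr, hzero]

lemma eventually_eq_zero_of_eq_zero (hu : IsNonlocalSupersolution J d T g h u ut c)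
    (hJc : Continuous J) (hJnn : ∀ x, 0 ≤ J x) (hJ0 : 0 < J 0) (hd : 0 < d)
    (hg : ContinuousOn g (Icc 0 T)) (hh : ContinuousOn h (Icc 0 T))
    (hnonneg : ∀ p ∈ movingRegion g h T, 0 ≤ u p.1 p.2) {C : ℝ}
    (hcC : ∀ t x, 0 < t → t ≤ T → g t < x → x < h t → -C ≤ c t x) {s x : ℝ}
    (hs : 0 < s) (hsT : s ≤ T) (hx : x ∈ Ioo (g s) (h s)) (hzero : u s x = 0) :
    ∀ᶠ y in 𝓝 x, u s y = 0 := by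
  have hut := hu.deriv_eq_zero_of_eq_zero hJnn hd.le hg hh hnonneg hcC hs hsT hx hzero
  have hle := hu.le_deriv s x hs hsT hx.1 hx.2
  rw [hzero, hut] at hle
  have hgh : g s ≤ h s := (hx.1.trans hx.2).le
  have hvanish : EqOn (fun y => J (x - y) * u s y) 0 (Ioo (g s) (h s)) :=
    eqOn_zero_of_intervalIntegral_eq_zero hgh
      ((hJc.comp (continuous_sub_left x)).continuousOn.mul (hu.continuousOn_slice hs.le hsT))
      (fun y hy => mul_nonneg (hJnn _) (hnonneg (s, y) ⟨hs.le, hsT, hy.1, hy.2⟩))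
      (le_antisymm (by nlinarith) (intervalIntegral.integral_nonneg hgh fun y hy =>
        mul_nonneg (hJnn _) (hnonneg (s, y) ⟨hs.le, hsT, hy.1, hy.2⟩)))
  have hJpos : ∀ᶠ y in 𝓝 x, 0 < J (x - y) :=
    ((hJc.comp (continuous_sub_left x)).tendsto x).eventually_const_lt (by simpa using hJ0)
  filter_upwards [hJpos, isOpen_Ioo.mem_nhds hx] with y hJy hy
  exact (mul_eq_zero.1 (hvanish hy)).resolve_left hJy.ne'

theorem pos (hu : IsNonlocalSupersolution J d T g h u ut c)
    (hJc : Continuous J) (hJnn : ∀ x, 0 ≤ J x) (hJ0 : 0 < J 0) (hd : 0 < d)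
    (hg : ContinuousOn g (Icc 0 T)) (hh : ContinuousOn h (Icc 0 T))
    (hg' : AntitoneOn g (Icc 0 T)) (hh' : MonotoneOn h (Icc 0 T)) (hgh₀ : g 0 < h 0)
    (hnonneg : ∀ p ∈ movingRegion g h T, 0 ≤ u p.1 p.2) {C : ℝ}
    (hcC : ∀ t x, 0 < t → t ≤ T → g t < x → x < h t → -C ≤ c t x)
    (hinit : ∃ x ∈ Icc (g 0) (h 0), u 0 x ≠ 0) {t x : ℝ} (ht : 0 < t) (htT : t ≤ T)
    (hx : x ∈ Ioo (g t) (h t)) : 0 < u t x := by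
  refine (hnonneg (t, x) ⟨ht.le, htT, hx.1.le, hx.2.le⟩).lt_of_ne' fun hzero => ?_
  obtain ⟨x₁, hx₁, hne⟩ := hinit
  have hslice : ∀ y ∈ Ioo (g t) (h t), u t y = 0 :=
    isPreconnected_Ioo.forall_eq_of_eventually_eq
      ((hu.continuousOn_slice ht.le htT).mono Ioo_subset_Icc_self)
      (fun y hy hy0 => nhdsWithin_le_nhds
        (hu.eventually_eq_zero_of_eq_zero hJc hJnn hJ0 hd hg hh hnonneg hcC ht htT hy hy0))
      hx hzero
  have hseg : ∀ y ∈ Ioo (g 0) (h 0), ∀ r ∈ Ioc 0 t, y ∈ Ioo (g r) (h r) := fun y hy r hr =>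
    ⟨(hg' ⟨le_rfl, ht.le.trans htT⟩ ⟨hr.1.le, hr.2.trans htT⟩ hr.1.le).trans_lt hy.1,
      hy.2.trans_le (hh' ⟨le_rfl, ht.le.trans htT⟩ ⟨hr.1.le, hr.2.trans htT⟩ hr.1.le)⟩
  have hinit0 : EqOn (u 0) 0 (Ioo (g 0) (h 0)) := fun y hy =>
    hu.eq_zero_of_eq_zero_of_le hJnn hd.le hnonneg hcC
      ⟨le_rfl, ht.le.trans htT, hy.1.le, hy.2.le⟩ htT (hseg y hy) ht.le
      (hslice y (hseg y hy t ⟨ht, le_rfl⟩))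
  exact hne (hinit0.of_subset_closure (hu.continuousOn_slice le_rfl (ht.le.trans htT))
    continuousOn_const Ioo_subset_Icc_self (closure_Ioo hgh₀.ne).ge hx₁)

end IsNonlocalSupersolution

theorem maximum_principle_moving_domain_general
    (J : ℝ → ℝ) (hJc : Continuous J) (hJnn : ∀ x, 0 ≤ J x)
    (hJ0 : 0 < J 0) (hJint : Integrable J) (hJ1 : (∫ x, J x) = 1)
    (d h0 T : ℝ) (hd : 0 < d) (hh0 : 0 < h0)
    (g h : ℝ → ℝ)
    (hgc : ContinuousOn g (Set.Icc 0 T)) (hhc : ContinuousOn h (Set.Icc 0 T))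
    (hh00 : h 0 = h0) (hg00 : g 0 = -h0)
    (hhinc : ∃ c > 0, ∀ t1 t2, 0 ≤ t1 → t1 < t2 → t2 ≤ T → c ≤ (h t2 - h t1) / (t2 - t1))
    (hgdec : ∃ c > 0, ∀ t1 t2, 0 ≤ t1 → t1 < t2 → t2 ≤ T → (g t2 - g t1) / (t2 - t1) ≤ -c)
    (u ut c : ℝ → ℝ → ℝ)
    (huc : ContinuousOn (fun p : ℝ × ℝ => u p.1 p.2)
      {p : ℝ × ℝ | 0 ≤ p.1 ∧ p.1 ≤ T ∧ g p.1 ≤ p.2 ∧ p.2 ≤ h p.1})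
    (hderiv : ∀ t x, 0 < t → t ≤ T → g t < x → x < h t →
      HasDerivAt (fun s => u s x) (ut t x) t)
    (hcbdd : ∃ C, ∀ t x, 0 < t → t ≤ T → g t < x → x < h t → |c t x| ≤ C)
    (hineq : ∀ t x, 0 < t → t ≤ T → g t < x → x < h t →
      d * (∫ y in g t..h t, J (x - y) * u t y) - d * u t x + c t x * u t x ≤ ut t x)
    (hbdry : ∀ t, 0 < t → t ≤ T → 0 ≤ u t (g t) ∧ 0 ≤ u t (h t))
    (hinit : ∀ x, -h0 ≤ x → x ≤ h0 → 0 ≤ u 0 x) :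
    (∀ t x, 0 ≤ t → t ≤ T → g t ≤ x → x ≤ h t → 0 ≤ u t x) ∧
    ((∃ x, -h0 ≤ x ∧ x ≤ h0 ∧ u 0 x ≠ 0) →
      ∀ t x, 0 < t → t ≤ T → g t < x → x < h t → 0 < u t x) := by
  obtain ⟨ch, hch, hh_slope⟩ := hhinc
  obtain ⟨cg, hcg, hg_slope⟩ := hgdec
  obtain ⟨C, hC⟩ := hcbdd
  have hu : IsNonlocalSupersolution J d T g h u ut c := ⟨huc, hderiv, hineq⟩
  have hinit' : ∀ x ∈ Icc (g 0) (h 0), 0 ≤ u 0 x := by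
    rw [hg00, hh00]
    exact fun x hx => hinit x hx.1 hx.2
  have hnonneg := hu.nonneg hJnn hJint hJ1.le hd.le hgc hhc
    (fun t x h₁ h₂ h₃ h₄ => (abs_le.1 (hC t x h₁ h₂ h₃ h₄)).2) hbdry hinit'
  refine ⟨fun t x h₁ h₂ h₃ h₄ => hnonneg (t, x) ⟨h₁, h₂, h₃, h₄⟩, ?_⟩
  rintro ⟨x₁, hx₁, hx₁', hne⟩ t x ht htT hgx hxh
  exact hu.pos hJc hJnn hJ0 hd hgc hhc
    (antitoneOn_Icc_of_slope_nonpos fun t₁ t₂ h₁ h₂ h₃ =>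
      (hg_slope t₁ t₂ h₁ h₂ h₃).trans (neg_nonpos.2 hcg.le))
    (monotoneOn_Icc_of_slope_nonneg fun t₁ t₂ h₁ h₂ h₃ => hch.le.trans (hh_slope t₁ t₂ h₁ h₂ h₃))
    (by linarith) hnonneg (fun t x h₁ h₂ h₃ h₄ => (abs_le.1 (hC t x h₁ h₂ h₃ h₄)).1)
    ⟨x₁, by rw [hg00, hh00]; exact ⟨hx₁, hx₁'⟩, hne⟩ ht htT ⟨hgx, hxh⟩

/-- **Maximum principle on a moving domain** (Lemma 2.2 of Cao–Du–Li–Li). -/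
theorem maximum_principle_moving_domain
    (J : ℝ → ℝ) (hJc : Continuous J) (hJnn : ∀ x, 0 ≤ J x)
    (hJeven : ∀ x, J (-x) = J x) (hJbdd : BddAbove (Set.range J))
    (hJ0 : 0 < J 0) (hJint : Integrable J) (hJ1 : (∫ x, J x) = 1)
    (d h0 T : ℝ) (hd : 0 < d) (hh0 : 0 < h0) (hT : 0 < T)
    (g h : ℝ → ℝ)
    (hgc : ContinuousOn g (Set.Icc 0 T)) (hhc : ContinuousOn h (Set.Icc 0 T))
    (hh00 : h 0 = h0) (hg00 : g 0 = -h0)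
    (hhinc : ∃ c > 0, ∀ t1 t2, 0 ≤ t1 → t1 < t2 → t2 ≤ T → c ≤ (h t2 - h t1) / (t2 - t1))
    (hgdec : ∃ c > 0, ∀ t1 t2, 0 ≤ t1 → t1 < t2 → t2 ≤ T → (g t2 - g t1) / (t2 - t1) ≤ -c)
    (u ut c : ℝ → ℝ → ℝ)
    (huc : ContinuousOn (fun p : ℝ × ℝ => u p.1 p.2)
      {p : ℝ × ℝ | 0 ≤ p.1 ∧ p.1 ≤ T ∧ g p.1 ≤ p.2 ∧ p.2 ≤ h p.1})
    (hutc : ContinuousOn (fun p : ℝ × ℝ => ut p.1 p.2)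
      {p : ℝ × ℝ | 0 ≤ p.1 ∧ p.1 ≤ T ∧ g p.1 ≤ p.2 ∧ p.2 ≤ h p.1})
    (hderiv : ∀ t x, 0 < t → t ≤ T → g t < x → x < h t →
      HasDerivAt (fun s => u s x) (ut t x) t)
    (hcbdd : ∃ C, ∀ t x, 0 < t → t ≤ T → g t < x → x < h t → |c t x| ≤ C)
    (hineq : ∀ t x, 0 < t → t ≤ T → g t < x → x < h t →
      d * (∫ y in g t..h t, J (x - y) * u t y) - d * u t x + c t x * u t x ≤ ut t x)
    (hbdry : ∀ t, 0 < t → t ≤ T → 0 ≤ u t (g t) ∧ 0 ≤ u t (h t))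
    (hinit : ∀ x, -h0 ≤ x → x ≤ h0 → 0 ≤ u 0 x) :
    (∀ t x, 0 ≤ t → t ≤ T → g t ≤ x → x ≤ h t → 0 ≤ u t x) ∧
    ((∃ x, -h0 ≤ x ∧ x ≤ h0 ∧ u 0 x ≠ 0) →
      ∀ t x, 0 < t → t ≤ T → g t < x → x < h t → 0 < u t x) :=
  maximum_principle_moving_domain_general J hJc hJnn hJ0 hJint hJ1 d h0 T hd hh0 g h hgc hhc hh00
    hg00 hhinc hgdec u ut c huc hderiv hcbdd hineq hbdry hinit
end

section
/- (Exponential bound on the range) Let (u, g, h) be a solution of the nonlocal free boundary problem on (0,T] with 0 < u(t,x) ≤ M0 := max{ sup_{[−h0,h0]} u0, K0 } for 0 < t ≤ T and g(t) < x < h(t). Then h(t) − g(t) ≤ 2 h0 e^{μ M0 t} for all t ∈ (0,T]. -/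
open MeasureTheory Set Filter Topology

/-- A solution of the nonlocal diffusion free boundary problem on the time
interval `(0, T]`: `u` is the density, `ut` its time derivative, `g, h` the
free boundaries. -/
def IsFBSolOn (d μ h0 T : ℝ) (J : ℝ → ℝ) (f : ℝ → ℝ → ℝ → ℝ)
    (u0 : ℝ → ℝ) (u ut : ℝ → ℝ → ℝ) (g h : ℝ → ℝ) : Prop :=
  ContinuousOn g (Set.Icc 0 T) ∧ ContinuousOn h (Set.Icc 0 T) ∧
  g 0 = -h0 ∧ h 0 = h0 ∧ (∀ t, 0 ≤ t → t ≤ T → g t < h t) ∧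
  (∀ t, 0 < t → t ≤ T →
    HasDerivAt h (μ * ∫ x in g t..h t, (∫ y in Set.Ioi (h t), J (x - y)) * u t x) t) ∧
  (∀ t, 0 < t → t ≤ T →
    HasDerivAt g (-(μ * ∫ x in g t..h t, (∫ y in Set.Iio (g t), J (x - y)) * u t x)) t) ∧
  ContinuousOn (fun p : ℝ × ℝ => u p.1 p.2)
    {p : ℝ × ℝ | 0 ≤ p.1 ∧ p.1 ≤ T ∧ g p.1 ≤ p.2 ∧ p.2 ≤ h p.1} ∧
  ContinuousOn (fun p : ℝ × ℝ => ut p.1 p.2)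
    {p : ℝ × ℝ | 0 ≤ p.1 ∧ p.1 ≤ T ∧ g p.1 ≤ p.2 ∧ p.2 ≤ h p.1} ∧
  (∀ t x, 0 < t → t ≤ T → g t < x → x < h t →
    HasDerivAt (fun s => u s x) (ut t x) t ∧
    ut t x = d * (∫ y in g t..h t, J (x - y) * u t y) - d * u t x + f t x (u t x)) ∧
  (∀ t, 0 < t → t ≤ T → u t (g t) = 0 ∧ u t (h t) = 0) ∧
  (∀ x, -h0 ≤ x → x ≤ h0 → u 0 x = u0 x)

/-! The width `h - g` grows at the rate `μ ∫_g^h (∫_{ℝ \ [g, h]} J (x - y) dy) u(t, x) dx` at which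
mass jumps out of `[g, h]`. As `J` has total mass one the inner integral is at most `1`, so the
rate is at most `μ M0 (h - g)`; hence `e^{-μ M0 t} (h - g)(t)` is nonincreasing on `[0, T]`, and it
starts at `2 h0`. -/

section KernelTails

variable (J : ℝ → ℝ)

theorem setIntegral_comp_sub_left_preimage (x : ℝ) (s : Set ℝ) :
    ∫ y in (x - ·) ⁻¹' s, J (x - y) = ∫ z in s, J z :=
  (Measure.measurePreserving_sub_left volume x).setIntegral_preimage_emb
    (MeasurableEquiv.subLeft x).measurableEmbedding J s

theorem integral_Ioi_comp_sub_left (x b : ℝ) :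
    ∫ y in Ioi b, J (x - y) = ∫ z in Iio (x - b), J z := by
  rw [← setIntegral_comp_sub_left_preimage J x,
    show (x - ·) ⁻¹' Iio (x - b) = Ioi b by ext y; simp]

theorem integral_Iio_comp_sub_left (x a : ℝ) :
    ∫ y in Iio a, J (x - y) = ∫ z in Ioi (x - a), J z := by
  rw [← setIntegral_comp_sub_left_preimage J x,
    show (x - ·) ⁻¹' Ioi (x - a) = Iio a by ext y; simp]

variable {J}

theorem continuous_integral_Iio (hJ : Integrable J) : Continuous fun c => ∫ z in Iio c, J z := by
  have hprim : (fun c => ∫ z in Iio c, J z) = fun c => (∫ z in Iic 0, J z) + ∫ z in 0..c, J z := by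
    funext c
    rw [← integral_Iic_eq_integral_Iio,
      ← intervalIntegral.integral_Iic_sub_Iic hJ.integrableOn hJ.integrableOn, add_sub_cancel]
  rw [hprim]
  exact continuous_const.add (hJ.continuous_primitive 0)

theorem continuous_integral_Ioi (hJ : Integrable J) : Continuous fun c => ∫ z in Ioi c, J z := by
  have htotal : (fun c => ∫ z in Ioi c, J z) = fun c => (∫ z, J z) - ∫ z in Iio c, J z := by
    funext c
    rw [← intervalIntegral.integral_Iic_add_Ioi hJ.integrableOn hJ.integrableOn,
      integral_Iic_eq_integral_Iio, add_sub_cancel_left]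
  rw [htotal]
  exact continuous_const.sub (continuous_integral_Iio hJ)

theorem integral_Ioi_add_integral_Iio_comp_sub_le (hJnn : ∀ x, 0 ≤ J x) (hJ : Integrable J)
    {a b : ℝ} (hab : a ≤ b) (x : ℝ) :
    (∫ y in Ioi b, J (x - y)) + ∫ y in Iio a, J (x - y) ≤ ∫ z, J z := by
  have hJx : Integrable fun y => J (x - y) := hJ.comp_sub_left x
  rw [← setIntegral_union (Ioi_disjoint_Iio_of_le hab) measurableSet_Iio hJx.integrableOn
    hJx.integrableOn, ← integral_sub_left_eq_self J volume x]
  exact setIntegral_le_integral hJx (Eventually.of_forall fun y => hJnn _)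

theorem integral_tails_mul_le (hJnn : ∀ x, 0 ≤ J x) (hJ : Integrable J) (hJ1 : ∫ z, J z = 1)
    {M a b : ℝ} (hab : a ≤ b) {v : ℝ → ℝ} (hv : ContinuousOn v (Icc a b))
    (hvM : ∀ x ∈ Ioo a b, 0 ≤ v x ∧ v x ≤ M) :
    (∫ x in a..b, (∫ y in Ioi b, J (x - y)) * v x) +
      ∫ x in a..b, (∫ y in Iio a, J (x - y)) * v x ≤ M * (b - a) := by
  have hright : Continuous fun x => ∫ y in Ioi b, J (x - y) := by
    simp only [integral_Ioi_comp_sub_left]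
    exact (continuous_integral_Iio hJ).comp (continuous_sub_right b)
  have hleft : Continuous fun x => ∫ y in Iio a, J (x - y) := by
    simp only [integral_Iio_comp_sub_left]
    exact (continuous_integral_Ioi hJ).comp (continuous_sub_right a)
  have hint {k : ℝ → ℝ} (hk : Continuous k) : IntervalIntegrable (fun x => k x * v x) volume a b :=
    (hk.continuousOn.mul (uIcc_of_le hab ▸ hv)).intervalIntegrable
  rw [← intervalIntegral.integral_add (hint hright) (hint hleft)]
  calc _ ≤ ∫ _ in a..b, M :=
        intervalIntegral.integral_mono_on_of_le_Ioo hab ((hint hright).add (hint hleft))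
          intervalIntegrable_const fun x hx => ?_
    _ = M * (b - a) := by rw [intervalIntegral.integral_const, smul_eq_mul, mul_comm]
  have htails := integral_Ioi_add_integral_Iio_comp_sub_le hJnn hJ hab x
  rw [hJ1] at htails
  obtain ⟨hv0, hvM⟩ := hvM x hx
  calc _ = ((∫ y in Ioi b, J (x - y)) + ∫ y in Iio a, J (x - y)) * v x := by ring
    _ ≤ v x := mul_le_of_le_one_left hv0 htails
    _ ≤ M := hvM

end KernelTails

theorem le_mul_exp_of_hasDerivAt_le_mul {φ φ' : ℝ → ℝ} {K a b : ℝ} (hab : a ≤ b)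
    (hφ : ContinuousOn φ (Icc a b)) (hφ' : ∀ s ∈ Ioo a b, HasDerivAt φ (φ' s) s)
    (hle : ∀ s ∈ Ioo a b, φ' s ≤ K * φ s) :
    φ b ≤ φ a * Real.exp (K * (b - a)) := by
  set ψ : ℝ → ℝ := fun s => Real.exp (-(K * s)) * φ s
  have hψ : AntitoneOn ψ (Icc a b) := by
    refine antitoneOn_of_hasDerivWithinAt_nonpos (convex_Icc a b)
      ((by fun_prop : Continuous fun s => Real.exp (-(K * s))).continuousOn.mul hφ)
      (f' := fun s => Real.exp (-(K * s)) * (φ' s - K * φ s)) ?_ ?_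
    · intro s hs
      rw [interior_Icc] at hs
      have hψ' : HasDerivAt ψ (Real.exp (-(K * s)) * (φ' s - K * φ s)) s := by
        refine (((hasDerivAt_id' s).const_mul K).neg.exp.mul (hφ' s hs)).congr_deriv ?_
        simp only [Pi.neg_apply]
        ring
      exact hψ'.hasDerivWithinAt
    · intro s hs
      rw [interior_Icc] at hs
      exact mul_nonpos_of_nonneg_of_nonpos (Real.exp_pos _).le (sub_nonpos.2 (hle s hs))
  have hba : ψ b ≤ ψ a := hψ ⟨le_rfl, hab⟩ ⟨hab, le_rfl⟩ hab
  calc φ b = Real.exp (K * b) * ψ b := by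
        rw [← mul_assoc, ← Real.exp_add, add_neg_cancel, Real.exp_zero, one_mul]
    _ ≤ Real.exp (K * b) * ψ a := mul_le_mul_of_nonneg_left hba (Real.exp_pos _).le
    _ = φ a * Real.exp (K * (b - a)) := by
      rw [mul_sub, sub_eq_add_neg, Real.exp_add]
      ring

theorem IsFBSolOn.continuousOn_slice {d μ h0 T : ℝ} {J : ℝ → ℝ} {f : ℝ → ℝ → ℝ → ℝ}
    {u0 : ℝ → ℝ} {u ut : ℝ → ℝ → ℝ} {g h : ℝ → ℝ} (hsol : IsFBSolOn d μ h0 T J f u0 u ut g h)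
    {s : ℝ} (hs : 0 ≤ s) (hsT : s ≤ T) : ContinuousOn (u s) (Icc (g s) (h s)) :=
  hsol.2.2.2.2.2.2.2.1.comp (continuous_const.prodMk continuous_id).continuousOn
    fun _ hx => ⟨hs, hsT, hx.1, hx.2⟩

theorem range_exponential_bound_general
    (J : ℝ → ℝ) (hJnn : ∀ x, 0 ≤ J x)
    (hJint : Integrable J) (hJ1 : (∫ x, J x) = 1)
    (f : ℝ → ℝ → ℝ → ℝ)
    (d μ h0 T : ℝ) (hμ : 0 < μ)
    (u0 : ℝ → ℝ)
    (u ut : ℝ → ℝ → ℝ) (g h : ℝ → ℝ)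
    (hsol : IsFBSolOn d μ h0 T J f u0 u ut g h)
    (M0 : ℝ)
    (hubd : ∀ t x, 0 < t → t ≤ T → g t < x → x < h t → 0 < u t x ∧ u t x ≤ M0) :
    ∀ t, 0 < t → t ≤ T → h t - g t ≤ 2 * h0 * Real.exp (μ * M0 * t) := by
  intro t ht htT
  have ⟨hgc, hhc, hg0, hh0, hgh, hhd, hgd, _⟩ := hsol
  calc h t - g t ≤ (h 0 - g 0) * Real.exp (μ * M0 * (t - 0)) :=
        le_mul_exp_of_hasDerivAt_le_mul (φ := fun r => h r - g r) ht.le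
          ((hhc.sub hgc).mono (Icc_subset_Icc_right htT))
          (fun s hs => (hhd s hs.1 (hs.2.le.trans htT)).sub (hgd s hs.1 (hs.2.le.trans htT)))
          fun s ⟨hs, hst⟩ => ?_
    _ = 2 * h0 * Real.exp (μ * M0 * t) := by rw [hh0, hg0, sub_zero]; ring
  have hsT : s ≤ T := hst.le.trans htT
  have hspeed := integral_tails_mul_le hJnn hJint hJ1 (hgh s hs.le hsT).le
    (hsol.continuousOn_slice hs.le hsT) fun x hx =>
      ⟨(hubd s x hs hsT hx.1 hx.2).1.le, (hubd s x hs hsT hx.1 hx.2).2⟩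
  calc _ = μ * ((∫ x in g s..h s, (∫ y in Ioi (h s), J (x - y)) * u s x) +
        ∫ x in g s..h s, (∫ y in Iio (g s), J (x - y)) * u s x) := by ring
    _ ≤ μ * M0 * (h s - g s) := by
      rw [mul_assoc]
      exact mul_le_mul_of_nonneg_left hspeed hμ.le

/-- **Exponential bound on the population range** (estimate (2.27) of Cao–Du–Li–Li). -/
theorem range_exponential_bound
    (J : ℝ → ℝ) (hJc : Continuous J) (hJnn : ∀ x, 0 ≤ J x)
    (hJeven : ∀ x, J (-x) = J x) (hJbdd : BddAbove (Set.range J))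
    (hJ0 : 0 < J 0) (hJint : Integrable J) (hJ1 : (∫ x, J x) = 1)
    (f : ℝ → ℝ → ℝ → ℝ)
    (hfc : ContinuousOn (fun p : ℝ × ℝ × ℝ => f p.1 p.2.1 p.2.2)
      {p : ℝ × ℝ × ℝ | 0 ≤ p.1 ∧ 0 ≤ p.2.2})
    (hf0 : ∀ t x, 0 ≤ t → f t x 0 = 0)
    (hfLip : ∀ L > 0, ∃ K > 0, ∀ t x u1 u2, 0 ≤ t → u1 ∈ Set.Icc 0 L → u2 ∈ Set.Icc 0 L →
      |f t x u1 - f t x u2| ≤ K * |u1 - u2|)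
    (K0 : ℝ) (hK0 : 0 < K0)
    (hfneg : ∀ t x u, 0 ≤ t → K0 ≤ u → f t x u < 0)
    (d μ h0 T : ℝ) (hd : 0 < d) (hμ : 0 < μ) (hh0 : 0 < h0) (hT : 0 < T)
    (u0 : ℝ → ℝ) (hu0c : ContinuousOn u0 (Set.Icc (-h0) h0))
    (hu0l : u0 (-h0) = 0) (hu0r : u0 h0 = 0)
    (hu0pos : ∀ x, -h0 < x → x < h0 → 0 < u0 x)
    (u ut : ℝ → ℝ → ℝ) (g h : ℝ → ℝ)
    (hsol : IsFBSolOn d μ h0 T J f u0 u ut g h)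
    (M0 : ℝ) (hM0 : M0 = max (sSup (u0 '' Set.Icc (-h0) h0)) K0)
    (hubd : ∀ t x, 0 < t → t ≤ T → g t < x → x < h t → 0 < u t x ∧ u t x ≤ M0) :
    ∀ t, 0 < t → t ≤ T → h t - g t ≤ 2 * h0 * Real.exp (μ * M0 * t) :=
  range_exponential_bound_general J hJnn hJint hJ1 f d μ h0 T hμ u0 u ut g h hsol M0 hubd
end

section
/- (Maximum principle on a fixed interval) Let d > 0, h0 > 0, T > 0. Suppose u and ∂ₜu are continuous on [0,T] × [−h0,h0], c is a bounded (measurable) function on [0,T] × [−h0,h0], and: ∂ₜu(t,x) ≥ d∫_{−h0}^{h0} J(x−y) u(t,y) dy − d·u(t,x) + c(t,x)·u(t,x) for all t ∈ (0,T] and x ∈ [−h0,h0], with u(0,x) ≥ 0 for x ∈ [−h0,h0]. Then u(t,x) ≥ 0 for all 0 ≤ t ≤ T and x ∈ [−h0,h0]. Moreover, if u(0,·) is not identically zero on [−h0,h0], then u(t,x) > 0 for all t ∈ (0,T] and x ∈ [−h0,h0]. -/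
/-!
Nonnegativity: if `v = e^{-λt} u` with `λ > sup c` had a negative minimum over
`[0, T] × [a, b]`, it would be attained at some `t₀ > 0`, where `∂ₜv ≤ 0`. There the
kernel term is at least the minimum itself (the kernel has mass at most one on `[a, b]`), so
the inequality forces `∂ₜv ≥ (c - λ) v > 0`.

Positivity: for `C ≥ |c|`, `e^{(d + C)t} u(t, x)` is nondecreasing in `t`, so `u(·, x₀)` stays
positive once `u(0, x₀) > 0`. If `u(t, x) = 0`, then `t` is a minimum time of `u(·, x)`, so
`∂ₜu(t, x) ≤ 0` and the inequality forces `∫ J(x - y) u(t, y) dy = 0`; as `J > 0` near `0`,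
`u(t, ·)` vanishes within a fixed distance of `x`, hence on all of `[a, b]` by connectedness,
including at `x₀`.
-/

open MeasureTheory Set Filter Topology Metric

theorem HasDerivAt.nonpos_of_isMinOn_Icc {f : ℝ → ℝ} {f' a b : ℝ} (hf : HasDerivAt f f' b)
    (hab : a < b) (hmin : IsMinOn f (Icc a b) b) : f' ≤ 0 := by
  have hslope : Tendsto (slope f b) (𝓝[<] b) (𝓝 f') :=
    (hasDerivAt_iff_tendsto_slope.mp hf).mono_left (nhdsLT_le_nhdsNE b)
  refine le_of_tendsto hslope ?_
  filter_upwards [Ioo_mem_nhdsLT hab] with t ht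
  rw [slope_def_field]
  exact div_nonpos_of_nonneg_of_nonpos (sub_nonneg.2 (hmin ⟨ht.1.le, ht.2.le⟩))
    (sub_nonpos.2 ht.2.le)

theorem intervalIntegral_comp_sub_le_integral {J : ℝ → ℝ} (hJnn : ∀ x, 0 ≤ J x)
    (hJint : Integrable J) (x : ℝ) {a b : ℝ} (hab : a ≤ b) :
    ∫ y in a..b, J (x - y) ≤ ∫ y, J y := by
  rw [intervalIntegral.integral_comp_sub_left, intervalIntegral.integral_of_le (by linarith)]
  exact setIntegral_le_integral hJint (ae_of_all _ hJnn)

theorem le_intervalIntegral_mul_of_le {K g : ℝ → ℝ} {a b m : ℝ} (hab : a ≤ b)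
    (hK : IntervalIntegrable K volume a b)
    (hKg : IntervalIntegrable (fun y ↦ K y * g y) volume a b) (hKnn : ∀ y, 0 ≤ K y)
    (hKmass : ∫ y in a..b, K y ≤ 1) (hm : m ≤ 0) (hg : ∀ y ∈ Icc a b, m ≤ g y) :
    m ≤ ∫ y in a..b, K y * g y :=
  calc m = 1 * m := (one_mul m).symm
    _ ≤ (∫ y in a..b, K y) * m := mul_le_mul_of_nonpos_right hKmass hm
    _ = ∫ y in a..b, K y * m := (intervalIntegral.integral_mul_const m K).symm
    _ ≤ ∫ y in a..b, K y * g y :=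
      intervalIntegral.integral_mono_on hab (hK.mul_const m) hKg
        fun y hy ↦ mul_le_mul_of_nonneg_left (hg y hy) (hKnn y)

theorem IsPreconnected.subset_of_forall_dist_lt {α : Type*} [PseudoMetricSpace α]
    {s Z : Set α} (hs : IsPreconnected s) {ε : ℝ} (hε : 0 < ε) (hZs : Z ⊆ s)
    (hZ : Z.Nonempty)
    (hspread : ∀ x ∈ Z, ∀ y ∈ s, dist x y < ε → y ∈ Z) : s ⊆ Z := by
  have hnear : ∀ y ∈ s, ∀ z ∈ Z, dist y z < ε → y ∈ Z := fun y hy z hz hyz ↦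
    hspread z hz y hy (by rwa [dist_comm])
  suffices s ⊆ thickening (ε / 2) Z from fun y hy ↦ by
    obtain ⟨z, hz, hyz⟩ := mem_thickening_iff.1 (this hy)
    exact hnear y hy z hz (by linarith)
  refine hs.subset_of_closure_inter_subset isOpen_thickening ?_ ?_
  · obtain ⟨z, hz⟩ := hZ
    exact ⟨z, hZs hz, self_subset_thickening (half_pos hε) Z hz⟩
  · rintro y ⟨hyU, hys⟩
    obtain ⟨p, hpU, hyp⟩ := mem_closure_iff.1 hyU (ε / 2) (half_pos hε)
    obtain ⟨z, hz, hpz⟩ := mem_thickening_iff.1 hpU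
    refine self_subset_thickening (half_pos hε) Z (hnear y hys z hz ?_)
    linarith [dist_triangle y p z]

theorem pos_of_hasDerivAt_of_add_mul_nonneg {f f' : ℝ → ℝ} {a b k : ℝ}
    (hf : ContinuousOn f (Icc a b)) (hf' : ∀ t ∈ Ioo a b, HasDerivAt f (f' t) t)
    (hineq : ∀ t ∈ Ioo a b, 0 ≤ f' t + k * f t) (ha : 0 < f a) : ∀ t ∈ Icc a b, 0 < f t := by
  have hmono : MonotoneOn (fun t ↦ Real.exp (k * t) * f t) (Icc a b) := by
    refine monotoneOn_of_hasDerivWithinAt_nonneg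
      (f' := fun t ↦ Real.exp (k * t) * (f' t + k * f t)) (convex_Icc a b)
      ((Continuous.continuousOn (by fun_prop)).mul hf) (fun t ht ↦ ?_) (fun t ht ↦ ?_)
    all_goals rw [interior_Icc] at ht
    · refine (((((hasDerivAt_id t).const_mul k).exp).mul (hf' t ht)).congr_deriv ?_)
        |>.hasDerivWithinAt
      simp only [id, mul_one]
      ring
    · exact mul_nonneg (Real.exp_pos _).le (hineq t ht)
  intro t ht
  have hmono_t := hmono (left_mem_Icc.2 (ht.1.trans ht.2)) ht ht.1
  exact pos_of_mul_pos_right ((mul_pos (Real.exp_pos _) ha).trans_le hmono_t)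
    (Real.exp_pos _).le

theorem nonneg_of_nonlocal_supersolution {J : ℝ → ℝ} {u ut c : ℝ → ℝ → ℝ} {d a b T C : ℝ}
    (hJc : Continuous J) (hJnn : ∀ x, 0 ≤ J x)
    (hJmass : ∀ x, ∫ y in a..b, J (x - y) ≤ 1) (hd : 0 ≤ d)
    (huc : ContinuousOn (fun p : ℝ × ℝ ↦ u p.1 p.2) (Icc 0 T ×ˢ Icc a b))
    (hderiv : ∀ t ∈ Ioc 0 T, ∀ x ∈ Icc a b, HasDerivAt (fun s ↦ u s x) (ut t x) t)
    (hc : ∀ t ∈ Ioc 0 T, ∀ x ∈ Icc a b, c t x ≤ C)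
    (hineq : ∀ t ∈ Ioc 0 T, ∀ x ∈ Icc a b,
      d * (∫ y in a..b, J (x - y) * u t y) - d * u t x + c t x * u t x ≤ ut t x)
    (hinit : ∀ x ∈ Icc a b, 0 ≤ u 0 x) :
    ∀ t ∈ Icc 0 T, ∀ x ∈ Icc a b, 0 ≤ u t x := by
  intro t ht x hx
  set lam := C + 1
  set v : ℝ × ℝ → ℝ := fun p ↦ Real.exp (-lam * p.1) * u p.1 p.2
  obtain ⟨⟨t0, x0⟩, ⟨ht0, hx0⟩, hmin⟩ := (isCompact_Icc.prod isCompact_Icc).exists_isMinOn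
    ⟨(t, x), ht, hx⟩ ((Continuous.continuousOn (by fun_prop)).mul huc :
      ContinuousOn v (Icc 0 T ×ˢ Icc a b))
  suffices hv : 0 ≤ v (t0, x0) from (mul_nonneg_iff_of_pos_left (Real.exp_pos _)).1
    (hv.trans (isMinOn_iff.1 hmin (t, x) ⟨ht, hx⟩))
  by_contra! hneg
  have ht0pos : 0 < t0 := by
    refine ht0.1.lt_of_ne fun h ↦ ?_
    subst h
    exact hneg.not_ge (mul_nonneg (Real.exp_pos _).le (hinit x0 hx0))
  set E := Real.exp (-lam * t0)
  have hv_deriv : HasDerivAt (fun s ↦ v (s, x0)) (E * (ut t0 x0 - lam * u t0 x0)) t0 := by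
    refine ((((hasDerivAt_id t0).const_mul (-lam)).exp).mul
      (hderiv t0 ⟨ht0pos, ht0.2⟩ x0 hx0)).congr_deriv ?_
    simp only [id, mul_one]
    ring
  have hv_deriv_nonpos := hv_deriv.nonpos_of_isMinOn_Icc ht0pos
    fun s hs ↦ isMinOn_iff.1 hmin (s, x0) ⟨⟨hs.1, hs.2.trans ht0.2⟩, hx0⟩
  have hkernel : v (t0, x0) ≤ E * ∫ y in a..b, J (x0 - y) * u t0 y := by
    have hab : a ≤ b := hx0.1.trans hx0.2
    have hJx0 : Continuous fun y ↦ J (x0 - y) := by fun_prop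
    have hut0 : ContinuousOn (fun y ↦ u t0 y) (Icc a b) :=
      huc.comp (continuous_const.prodMk continuous_id).continuousOn fun y hy ↦ ⟨ht0, hy⟩
    calc v (t0, x0) ≤ ∫ y in a..b, J (x0 - y) * (E * u t0 y) :=
          le_intervalIntegral_mul_of_le hab (hJx0.intervalIntegrable _ _)
            ((hJx0.continuousOn.mul (continuousOn_const.mul hut0)).intervalIntegrable_of_Icc hab)
            (fun y ↦ hJnn _) (hJmass x0) hneg.le
            fun y hy ↦ isMinOn_iff.1 hmin (t0, y) ⟨ht0, hy⟩
      _ = E * ∫ y in a..b, J (x0 - y) * u t0 y := by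
        rw [← intervalIntegral.integral_const_mul]
        simp only [mul_left_comm]
  have hineq0 := mul_le_mul_of_nonneg_left (hineq t0 ⟨ht0pos, ht0.2⟩ x0 hx0)
    (Real.exp_pos (-lam * t0)).le
  have hkernel_d := mul_le_mul_of_nonneg_left hkernel hd
  have hcoef : (lam - c t0 x0) * v (t0, x0) < 0 :=
    mul_neg_of_pos_of_neg (by linarith [hc t0 ⟨ht0pos, ht0.2⟩ x0 hx0]) hneg
  have hv0 : v (t0, x0) = E * u t0 x0 := rfl
  rw [hv0] at hkernel hcoef
  nlinarith

theorem eq_zero_of_nonlocal_supersolution_eq_zero {J : ℝ → ℝ} {u ut c : ℝ → ℝ → ℝ}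
    {d a b t ε x y : ℝ} (hJc : Continuous J) (hJnn : ∀ z, 0 ≤ J z)
    (hJpos : ∀ z, dist z 0 < ε → 0 < J z) (hd : 0 < d) (hab : a < b) (ht : 0 < t)
    (hut : ContinuousOn (u t) (Icc a b))
    (hnonneg : ∀ s ∈ Icc 0 t, ∀ z ∈ Icc a b, 0 ≤ u s z)
    (hderiv : HasDerivAt (fun s ↦ u s x) (ut t x) t)
    (hineq : d * (∫ z in a..b, J (x - z) * u t z) - d * u t x + c t x * u t x ≤ ut t x)
    (hx : x ∈ Icc a b) (hzero : u t x = 0) (hy : y ∈ Icc a b) (hxy : dist x y < ε) :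
    u t y = 0 := by
  have hut_nonpos : ut t x ≤ 0 := hderiv.nonpos_of_isMinOn_Icc ht <|
    isMinOn_iff.2 fun s hs ↦ hzero ▸ hnonneg s hs x hx
  have hintegral_nonpos : ∫ z in a..b, J (x - z) * u t z ≤ 0 := by
    rw [hzero, mul_zero, mul_zero, sub_zero, add_zero] at hineq
    exact nonpos_of_mul_nonpos_right (hineq.trans hut_nonpos) hd
  by_contra hne
  have hpos : 0 < u t y := (hnonneg t ⟨ht.le, le_rfl⟩ y hy).lt_of_ne' hne
  have hJxy : 0 < J (x - y) := hJpos _ (by rwa [dist_zero_right, ← dist_eq_norm])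
  have hintegral_pos : 0 < ∫ z in a..b, J (x - z) * u t z :=
    intervalIntegral.integral_pos hab
      ((by fun_prop : Continuous fun z ↦ J (x - z)).continuousOn.mul hut)
      (fun z hz ↦ mul_nonneg (hJnn _) (hnonneg t ⟨ht.le, le_rfl⟩ z (Ioc_subset_Icc_self hz)))
      ⟨y, hy, mul_pos hJxy hpos⟩
  exact hintegral_pos.not_ge hintegral_nonpos

theorem pos_of_nonlocal_supersolution {J : ℝ → ℝ} {u ut c : ℝ → ℝ → ℝ} {d a b T C : ℝ}
    (hJc : Continuous J) (hJnn : ∀ x, 0 ≤ J x) (hJ0 : 0 < J 0) (hd : 0 < d) (hab : a < b)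
    (huc : ContinuousOn (fun p : ℝ × ℝ ↦ u p.1 p.2) (Icc 0 T ×ˢ Icc a b))
    (hderiv : ∀ t ∈ Ioc 0 T, ∀ x ∈ Icc a b, HasDerivAt (fun s ↦ u s x) (ut t x) t)
    (hc : ∀ t ∈ Ioc 0 T, ∀ x ∈ Icc a b, -C ≤ c t x)
    (hineq : ∀ t ∈ Ioc 0 T, ∀ x ∈ Icc a b,
      d * (∫ y in a..b, J (x - y) * u t y) - d * u t x + c t x * u t x ≤ ut t x)
    (hnonneg : ∀ t ∈ Icc 0 T, ∀ x ∈ Icc a b, 0 ≤ u t x)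
    {x₀ : ℝ} (hx₀ : x₀ ∈ Icc a b) (hpos : 0 < u 0 x₀) :
    ∀ t ∈ Ioc 0 T, ∀ x ∈ Icc a b, 0 < u t x := by
  intro t ht x hx
  obtain ⟨ε, hε, hJpos⟩ :=
    Metric.eventually_nhds_iff.1 (hJc.continuousAt.eventually (lt_mem_nhds hJ0))
  have hx₀_pos : 0 < u t x₀ := by
    refine pos_of_hasDerivAt_of_add_mul_nonneg (f := fun s ↦ u s x₀) (k := d + C)
      (huc.comp (continuous_id.prodMk continuous_const).continuousOn fun s hs ↦ ⟨hs, hx₀⟩)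
      (fun s hs ↦ hderiv s (Ioo_subset_Ioc_self hs) x₀ hx₀) (fun s hs ↦ ?_) hpos
      t ⟨ht.1.le, ht.2⟩
    have hs' : s ∈ Ioc 0 T := Ioo_subset_Ioc_self hs
    have hu := hnonneg s (Ioc_subset_Icc_self hs') x₀ hx₀
    have hintegral : 0 ≤ ∫ y in a..b, J (x₀ - y) * u s y :=
      intervalIntegral.integral_nonneg hab.le fun y hy ↦
        mul_nonneg (hJnn _) (hnonneg s (Ioc_subset_Icc_self hs') y hy)
    nlinarith [hineq s hs' x₀ hx₀, hc s hs' x₀ hx₀, mul_nonneg hd.le hintegral,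
      mul_nonneg (neg_le_iff_add_nonneg.1 (hc s hs' x₀ hx₀)) hu]
  refine (hnonneg t (Ioc_subset_Icc_self ht) x hx).lt_of_ne' fun hzero ↦ hx₀_pos.ne' ?_
  have hut : ContinuousOn (u t) (Icc a b) :=
    huc.comp (continuous_const.prodMk continuous_id).continuousOn
      fun z hz ↦ ⟨Ioc_subset_Icc_self ht, hz⟩
  have hZ : Icc a b ⊆ {y ∈ Icc a b | u t y = 0} :=
    isPreconnected_Icc.subset_of_forall_dist_lt hε (sep_subset _ _) ⟨x, hx, hzero⟩
      fun x' hx' y hy hxy ↦ ⟨hy, eq_zero_of_nonlocal_supersolution_eq_zero hJc hJnn hJpos hd hab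
        ht.1 hut (fun s hs z hz ↦ hnonneg s ⟨hs.1, hs.2.trans ht.2⟩ z hz) (hderiv t ht x' hx'.1)
        (hineq t ht x' hx'.1) hx'.1 hx'.2 hy hxy⟩
  exact (hZ hx₀).2

theorem maximum_principle_fixed_interval_general
    (J : ℝ → ℝ) (hJc : Continuous J) (hJnn : ∀ x, 0 ≤ J x)
    (hJ0 : 0 < J 0) (hJint : Integrable J) (hJ1 : (∫ x, J x) = 1)
    (d h0 T : ℝ) (hd : 0 < d) (hh0 : 0 < h0)
    (u ut c : ℝ → ℝ → ℝ)
    (huc : ContinuousOn (fun p : ℝ × ℝ => u p.1 p.2) (Set.Icc 0 T ×ˢ Set.Icc (-h0) h0))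
    (hderiv : ∀ t x, 0 < t → t ≤ T → -h0 ≤ x → x ≤ h0 →
      HasDerivAt (fun s => u s x) (ut t x) t)
    (hcbdd : ∃ C, ∀ t x, 0 ≤ t → t ≤ T → -h0 ≤ x → x ≤ h0 → |c t x| ≤ C)
    (hineq : ∀ t x, 0 < t → t ≤ T → -h0 ≤ x → x ≤ h0 →
      d * (∫ y in (-h0)..h0, J (x - y) * u t y) - d * u t x + c t x * u t x ≤ ut t x)
    (hinit : ∀ x, -h0 ≤ x → x ≤ h0 → 0 ≤ u 0 x) :
    (∀ t x, 0 ≤ t → t ≤ T → -h0 ≤ x → x ≤ h0 → 0 ≤ u t x) ∧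
    ((∃ x, -h0 ≤ x ∧ x ≤ h0 ∧ u 0 x ≠ 0) →
      ∀ t x, 0 < t → t ≤ T → -h0 ≤ x → x ≤ h0 → 0 < u t x) := by
  obtain ⟨C, hC⟩ := hcbdd
  have hc : ∀ t ∈ Ioc 0 T, ∀ x ∈ Icc (-h0) h0, -C ≤ c t x ∧ c t x ≤ C :=
    fun t ht x hx ↦ abs_le.1 (hC t x ht.1.le ht.2 hx.1 hx.2)
  have hderiv' : ∀ t ∈ Ioc 0 T, ∀ x ∈ Icc (-h0) h0, HasDerivAt (fun s ↦ u s x) (ut t x) t :=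
    fun t ht x hx ↦ hderiv t x ht.1 ht.2 hx.1 hx.2
  have hineq' : ∀ t ∈ Ioc 0 T, ∀ x ∈ Icc (-h0) h0,
      d * (∫ y in (-h0)..h0, J (x - y) * u t y) - d * u t x + c t x * u t x ≤ ut t x :=
    fun t ht x hx ↦ hineq t x ht.1 ht.2 hx.1 hx.2
  have hJmass : ∀ x, ∫ y in (-h0)..h0, J (x - y) ≤ 1 := fun x ↦
    (intervalIntegral_comp_sub_le_integral hJnn hJint x (by linarith)).trans_eq hJ1
  have hnonneg : ∀ t ∈ Icc 0 T, ∀ x ∈ Icc (-h0) h0, 0 ≤ u t x :=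
    nonneg_of_nonlocal_supersolution hJc hJnn hJmass hd.le huc hderiv'
      (fun t ht x hx ↦ (hc t ht x hx).2) hineq' fun x hx ↦ hinit x hx.1 hx.2
  refine ⟨fun t x ht htT hxl hxr ↦ hnonneg t ⟨ht, htT⟩ x ⟨hxl, hxr⟩, ?_⟩
  rintro ⟨x₀, hx₀l, hx₀r, hx₀⟩ t x ht htT hxl hxr
  exact pos_of_nonlocal_supersolution hJc hJnn hJ0 hd (by linarith) huc hderiv'
    (fun t ht x hx ↦ (hc t ht x hx).1) hineq' hnonneg ⟨hx₀l, hx₀r⟩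
    ((hinit x₀ hx₀l hx₀r).lt_of_ne' hx₀) t ⟨ht, htT⟩ x ⟨hxl, hxr⟩

/-- **Maximum principle on a fixed interval** (Lemma 3.4 of Cao–Du–Li–Li). -/
theorem maximum_principle_fixed_interval
    (J : ℝ → ℝ) (hJc : Continuous J) (hJnn : ∀ x, 0 ≤ J x)
    (hJeven : ∀ x, J (-x) = J x) (hJbdd : BddAbove (Set.range J))
    (hJ0 : 0 < J 0) (hJint : Integrable J) (hJ1 : (∫ x, J x) = 1)
    (d h0 T : ℝ) (hd : 0 < d) (hh0 : 0 < h0) (hT : 0 < T)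
    (u ut c : ℝ → ℝ → ℝ)
    (huc : ContinuousOn (fun p : ℝ × ℝ => u p.1 p.2) (Set.Icc 0 T ×ˢ Set.Icc (-h0) h0))
    (hutc : ContinuousOn (fun p : ℝ × ℝ => ut p.1 p.2) (Set.Icc 0 T ×ˢ Set.Icc (-h0) h0))
    (hderiv : ∀ t x, 0 < t → t ≤ T → -h0 ≤ x → x ≤ h0 →
      HasDerivAt (fun s => u s x) (ut t x) t)
    (hcbdd : ∃ C, ∀ t x, 0 ≤ t → t ≤ T → -h0 ≤ x → x ≤ h0 → |c t x| ≤ C)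
    (hineq : ∀ t x, 0 < t → t ≤ T → -h0 ≤ x → x ≤ h0 →
      d * (∫ y in (-h0)..h0, J (x - y) * u t y) - d * u t x + c t x * u t x ≤ ut t x)
    (hinit : ∀ x, -h0 ≤ x → x ≤ h0 → 0 ≤ u 0 x) :
    (∀ t x, 0 ≤ t → t ≤ T → -h0 ≤ x → x ≤ h0 → 0 ≤ u t x) ∧
    ((∃ x, -h0 ≤ x ∧ x ≤ h0 ∧ u 0 x ≠ 0) →
      ∀ t x, 0 < t → t ≤ T → -h0 ≤ x → x ≤ h0 → 0 < u t x) :=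
  maximum_principle_fixed_interval_general J hJc hJnn hJ0 hJint hJ1 d h0 T hd hh0 u ut c huc hderiv
    hcbdd hineq hinit
end

section
/- (Continuity of the principal eigenvalue in the interval length) Let a0 > 0 be a constant. Then the function ℓ ↦ λ_p(ℓ) := λ_p(L_{(0,ℓ)} + a0) is continuous on (0,∞): for every ℓ0 > 0, λ_p(ℓ) → λ_p(ℓ0) as ℓ → ℓ0. -/
/-!
A supersolution `φ` on `[0, l]` is transported to `[0, ρ l]` by the dilation `φ (· / ρ)`. Since
`ρ J (ρ u) ≤ J u + η` for `ρ` near `1`, uniformly for `u` in a compact set, this costs at most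
`d η ∫ φ` in the inequality. A Harnack inequality `∫₀ˡ φ ≤ C φ x` turns this into a relative
error `d C η φ x`: when `λ ≤ a₀` the supersolution satisfies `∫ J (x - y) φ y ≤ φ x`, and as
`J ≥ J 0 / 2` near `0`, widening a window around `x` by a fixed step multiplies the integral of
`φ` over it by a bounded factor, so `C` is uniform for `l` in a compact subset of `(0, ∞)`.
Hence `λ_p(l') ≤ λ_p(l) + ε` whenever `|l' - l|` is small, uniformly there.
-/

open MeasureTheory Set Filter Topology

/-- The principal eigenvalue `λ_p(L_{(l1,l2)} + a)` of the nonlocal operator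
`φ ↦ d(∫_{l1}^{l2} J(x-y) φ(y) dy − φ(x)) + a φ(x)` on `[l1, l2]`, defined as the
infimum of the set of `λ` admitting a positive continuous test function `φ` with
`(L + a)[φ] ≤ λ φ` on `[l1, l2]`. -/
noncomputable def lambdaP (d : ℝ) (J : ℝ → ℝ) (l1 l2 a : ℝ) : ℝ :=
  sInf {lam : ℝ | ∃ φ : ℝ → ℝ, ContinuousOn φ (Set.Icc l1 l2) ∧
    (∀ x ∈ Set.Icc l1 l2, 0 < φ x) ∧
    ∀ x ∈ Set.Icc l1 l2,
      d * ((∫ y in l1..l2, J (x - y) * φ y) - φ x) + a * φ x ≤ lam * φ x}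

def IsSupersolution (d : ℝ) (J : ℝ → ℝ) (l₁ l₂ a lam : ℝ) (φ : ℝ → ℝ) : Prop :=
  ContinuousOn φ (Icc l₁ l₂) ∧ (∀ x ∈ Icc l₁ l₂, 0 < φ x) ∧
    ∀ x ∈ Icc l₁ l₂, d * ((∫ y in l₁..l₂, J (x - y) * φ y) - φ x) + a * φ x ≤ lam * φ x

section Supersolution

variable {d : ℝ} {J φ : ℝ → ℝ} {l l₁ l₂ a lam : ℝ}

theorem lambdaP_eq_sInf :
    lambdaP d J l₁ l₂ a = sInf {lam | ∃ φ, IsSupersolution d J l₁ l₂ a lam φ} := rfl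

theorem isSupersolution_one (hJnn : ∀ u, 0 ≤ J u) (hJint : Integrable J) (hJ1 : ∫ u, J u = 1)
    (hd : 0 ≤ d) : IsSupersolution d J l₁ l₂ a a fun _ => 1 := by
  refine ⟨continuousOn_const, fun _ _ => one_pos, fun x hx => ?_⟩
  have hK : ∫ y in l₁..l₂, J (x - y) * 1 ≤ 1 := by
    simp only [mul_one]
    rw [intervalIntegral.integral_comp_sub_left J x,
      intervalIntegral.integral_of_le (by linarith [hx.1, hx.2]), ← hJ1]
    exact setIntegral_le_integral hJint (.of_forall hJnn)
  nlinarith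

theorem IsSupersolution.sub_le (hφ : IsSupersolution d J l₁ l₂ a lam φ) (hJnn : ∀ u, 0 ≤ J u)
    (hd : 0 ≤ d) (hl : l₁ ≤ l₂) : a - d ≤ lam := by
  have hl₁ : l₁ ∈ Icc l₁ l₂ := left_mem_Icc.2 hl
  have hK : 0 ≤ ∫ y in l₁..l₂, J (l₁ - y) * φ y :=
    intervalIntegral.integral_nonneg hl fun y hy => mul_nonneg (hJnn _) (hφ.2.1 y hy).le
  have := hφ.2.2 l₁ hl₁
  nlinarith [hφ.2.1 l₁ hl₁]

theorem IsSupersolution.kernel_le (hφ : IsSupersolution d J l₁ l₂ a lam φ) (hd : 0 < d)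
    (hlam : lam ≤ a) {x : ℝ} (hx : x ∈ Icc l₁ l₂) : ∫ y in l₁..l₂, J (x - y) * φ y ≤ φ x := by
  have := hφ.2.2 x hx
  have : (lam - a) * φ x ≤ 0 := mul_nonpos_of_nonpos_of_nonneg (by linarith) (hφ.2.1 x hx).le
  nlinarith

theorem lambdaP_le_of_isSupersolution (hJnn : ∀ u, 0 ≤ J u) (hd : 0 ≤ d) (hl : l₁ ≤ l₂)
    (hφ : IsSupersolution d J l₁ l₂ a lam φ) : lambdaP d J l₁ l₂ a ≤ lam :=
  lambdaP_eq_sInf (d := d) ▸ csInf_le ⟨a - d, fun _ ⟨_, hψ⟩ => hψ.sub_le hJnn hd hl⟩ ⟨φ, hφ⟩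

theorem lambdaP_le_self (hJnn : ∀ u, 0 ≤ J u) (hJint : Integrable J) (hJ1 : ∫ u, J u = 1)
    (hd : 0 ≤ d) (hl : l₁ ≤ l₂) : lambdaP d J l₁ l₂ a ≤ a :=
  lambdaP_le_of_isSupersolution hJnn hd hl (isSupersolution_one hJnn hJint hJ1 hd)

theorem exists_isSupersolution_lt (hJnn : ∀ u, 0 ≤ J u) (hJint : Integrable J)
    (hJ1 : ∫ u, J u = 1) (hd : 0 ≤ d) {t : ℝ} (ht : lambdaP d J l₁ l₂ a < t) :
    ∃ lam < t, ∃ φ, IsSupersolution d J l₁ l₂ a lam φ := by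
  have hne : {lam | ∃ φ, IsSupersolution d J l₁ l₂ a lam φ}.Nonempty :=
    ⟨a, _, isSupersolution_one hJnn hJint hJ1 hd⟩
  obtain ⟨lam, ⟨φ, hφ⟩, hlt⟩ := exists_lt_of_csInf_lt hne ht
  exact ⟨lam, hlt, φ, hφ⟩

theorem IsSupersolution.dilation (hφ : IsSupersolution d J 0 l a lam φ) (hJc : Continuous J)
    (hd : 0 ≤ d) {ρ C η : ℝ} (hρ : 0 < ρ) (hη : 0 ≤ η)
    (hC : ∀ x ∈ Icc 0 l, ∫ y in 0..l, φ y ≤ C * φ x)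
    (hJρ : ∀ u ∈ Icc (-l) l, ρ * J (ρ * u) ≤ J u + η) :
    IsSupersolution d J 0 (ρ * l) a (lam + d * C * η) fun x => φ (x / ρ) := by
  obtain ⟨hφc, hφpos, hφle⟩ := hφ
  have hmaps : MapsTo (· / ρ) (Icc 0 (ρ * l)) (Icc 0 l) := fun x hx =>
    ⟨div_nonneg hx.1 hρ.le, (div_le_iff₀' hρ).2 hx.2⟩
  refine ⟨hφc.comp (continuousOn_id.div_const ρ) hmaps, fun x hx => hφpos _ (hmaps hx),
    fun x hx => ?_⟩
  obtain ⟨x', hx', rfl⟩ : ∃ x' ∈ Icc 0 l, ρ * x' = x :=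
    ⟨x / ρ, hmaps hx, mul_div_cancel₀ x hρ.ne'⟩
  simp only [mul_div_cancel_left₀ x' hρ.ne']
  have hl : 0 ≤ l := hx'.1.trans hx'.2
  have hcont : ∀ g : ℝ → ℝ, Continuous g → IntervalIntegrable (fun z => g z * φ z) volume 0 l :=
    fun g hg => (hg.continuousOn.mul (hφc.mono (by rw [uIcc_of_le hl]))).intervalIntegrable
  have hsub : ∫ y in 0..ρ * l, J (ρ * x' - y) * φ (y / ρ) =
      ρ * ∫ z in 0..l, J (ρ * (x' - z)) * φ z := by
    have := intervalIntegral.integral_comp_div (a := 0) (b := ρ * l)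
      (fun z => J (ρ * (x' - z)) * φ z) hρ.ne'
    simp only [zero_div, mul_div_cancel_left₀ l hρ.ne', smul_eq_mul] at this
    rw [← this]
    refine intervalIntegral.integral_congr fun y _ => ?_
    simp only [mul_sub, mul_div_cancel₀ y hρ.ne']
  have hdil : ρ * ∫ z in 0..l, J (ρ * (x' - z)) * φ z ≤
      (∫ z in 0..l, J (x' - z) * φ z) + η * ∫ z in 0..l, φ z := by
    rw [← intervalIntegral.integral_const_mul, ← intervalIntegral.integral_const_mul,
      ← intervalIntegral.integral_add (hcont _ (by fun_prop)) (hcont _ continuous_const)]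
    refine intervalIntegral.integral_mono_on hl ?_ ?_ fun z hz => ?_
    · simpa only [mul_assoc] using (hcont (fun z => J (ρ * (x' - z))) (by fun_prop)).const_mul ρ
    · exact (hcont _ (by fun_prop)).add (hcont _ continuous_const)
    · have hu : x' - z ∈ Icc (-l) l := ⟨by linarith [hx'.1, hz.2], by linarith [hx'.2, hz.1]⟩
      nlinarith [hJρ _ hu, (hφpos z hz).le]
  have hηC : d * (η * ∫ z in 0..l, φ z) ≤ d * C * η * φ x' := by
    nlinarith [mul_le_mul_of_nonneg_left (hC x' hx') (mul_nonneg hd hη)]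
  have := hφle x' hx'
  rw [hsub]
  nlinarith [mul_le_mul_of_nonneg_left hdil hd]

end Supersolution

section Harnack

variable {J φ : ℝ → ℝ} {l r δ₀ : ℝ}

theorem mul_integral_le_of_kernel_integral_le (hJc : Continuous J) (hJnn : ∀ u, 0 ≤ J u)
    (hJr : ∀ u, |u| ≤ r → δ₀ ≤ J u) (hφc : ContinuousOn φ (Icc 0 l))
    (hφnn : ∀ y ∈ Icc 0 l, 0 ≤ φ y) {x : ℝ} (hK : ∫ y in 0..l, J (x - y) * φ y ≤ φ x)
    {a b : ℝ} (ha : 0 ≤ a) (hab : a ≤ b) (hb : b ≤ l) (hxa : x - r ≤ a) (hbx : b ≤ x + r) :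
    δ₀ * ∫ y in a..b, φ y ≤ φ x := by
  have hsub : uIcc a b ⊆ Icc 0 l := by rw [uIcc_of_le hab]; exact Icc_subset_Icc ha hb
  have hl : uIcc 0 l = Icc 0 l := uIcc_of_le (ha.trans (hab.trans hb))
  have hKc : ContinuousOn (fun y => J (x - y) * φ y) (Icc 0 l) := by fun_prop
  calc δ₀ * ∫ y in a..b, φ y = ∫ y in a..b, δ₀ * φ y :=
        (intervalIntegral.integral_const_mul _ _).symm
    _ ≤ ∫ y in a..b, J (x - y) * φ y := by
        refine intervalIntegral.integral_mono_on hab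
          ((hφc.mono hsub).const_smul δ₀).intervalIntegrable (hKc.mono hsub).intervalIntegrable
          fun y hy => ?_
        exact mul_le_mul_of_nonneg_right (hJr _ (abs_le.2 ⟨by linarith [hy.2], by linarith [hy.1]⟩))
          (hφnn y (hsub (uIcc_of_le hab ▸ hy)))
    _ ≤ ∫ y in 0..l, J (x - y) * φ y := by
        refine intervalIntegral.integral_mono_interval ha hab hb
          ((ae_restrict_mem measurableSet_Ioc).mono fun y hy => ?_)
          (hKc.mono hl.subset).intervalIntegrable
        exact mul_nonneg (hJnn _) (hφnn y (Ioc_subset_Icc_self hy))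
    _ ≤ φ x := hK

theorem mul_integral_le_integral_of_kernel_integral_le (hJc : Continuous J) (hJnn : ∀ u, 0 ≤ J u)
    (hJr : ∀ u, |u| ≤ r → δ₀ ≤ J u) (hφc : ContinuousOn φ (Icc 0 l))
    (hφnn : ∀ y ∈ Icc 0 l, 0 ≤ φ y) (hK : ∀ x ∈ Icc 0 l, ∫ y in 0..l, J (x - y) * φ y ≤ φ x)
    {a b c e : ℝ} (ha : 0 ≤ a) (hab : a ≤ b) (hb : b ≤ l) (hc : 0 ≤ c) (hce : c ≤ e) (he : e ≤ l)
    (hea : e - r ≤ a) (hbc : b ≤ c + r) :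
    (e - c) * (δ₀ * ∫ y in a..b, φ y) ≤ ∫ y in c..e, φ y := by
  have hsub : uIcc c e ⊆ Icc 0 l := by rw [uIcc_of_le hce]; exact Icc_subset_Icc hc he
  calc (e - c) * (δ₀ * ∫ y in a..b, φ y) = ∫ _ in c..e, δ₀ * ∫ y in a..b, φ y := by
        rw [intervalIntegral.integral_const, smul_eq_mul]
    _ ≤ ∫ y in c..e, φ y := by
        refine intervalIntegral.integral_mono_on hce intervalIntegrable_const
          (hφc.mono hsub).intervalIntegrable fun y hy => ?_
        have hy' : y ∈ Icc 0 l := ⟨hc.trans hy.1, hy.2.trans he⟩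
        exact mul_integral_le_of_kernel_integral_le hJc hJnn hJr hφc hφnn (hK y hy') ha hab hb
          (by linarith [hy.2]) (by linarith [hy.1])

theorem integral_widen_le (hJc : Continuous J) (hJnn : ∀ u, 0 ≤ J u)
    (hJr : ∀ u, |u| ≤ r → δ₀ ≤ J u) (hφc : ContinuousOn φ (Icc 0 l))
    (hφnn : ∀ y ∈ Icc 0 l, 0 ≤ φ y) (hK : ∀ x ∈ Icc 0 l, ∫ y in 0..l, J (x - y) * φ y ≤ φ x)
    (hδ₀ : 0 < δ₀) {h : ℝ} (hh : 0 < h) (hhr : 2 * h ≤ r) {a' a b b' : ℝ} (ha' : 0 ≤ a')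
    (ha'a : a' ≤ a) (haa' : a ≤ a' + h) (hab : a + h ≤ b) (hbb' : b ≤ b') (hb'b : b' ≤ b + h)
    (hb' : b' ≤ l) :
    ∫ y in a'..b', φ y ≤ (1 + 2 / (h * δ₀)) * ∫ y in a..b, φ y := by
  have hii : ∀ p ∈ Icc 0 l, ∀ q ∈ Icc 0 l, IntervalIntegrable φ volume p q :=
    fun p hp q hq => (hφc.mono (uIcc_subset_Icc hp hq)).intervalIntegrable
  have hmono : ∀ p q, a ≤ p → p ≤ q → q ≤ b → ∫ y in p..q, φ y ≤ ∫ y in a..b, φ y :=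
    fun p q hap hpq hqb => intervalIntegral.integral_mono_interval hap hpq hqb
      ((ae_restrict_mem measurableSet_Ioc).mono fun y hy =>
        hφnn y ⟨by linarith [hy.1], by linarith [hy.2]⟩)
      (hii a ⟨by linarith, by linarith⟩ b ⟨by linarith, by linarith⟩)
  have hleft : h * (δ₀ * ∫ y in a'..a, φ y) ≤ ∫ y in a..b, φ y := by
    have := mul_integral_le_integral_of_kernel_integral_le hJc hJnn hJr hφc hφnn hK
      (c := a) (e := a + h) ha' ha'a (by linarith) (by linarith) (by linarith) (by linarith)
      (by linarith) (by linarith)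
    rw [add_sub_cancel_left] at this
    exact this.trans (hmono a (a + h) le_rfl (by linarith) hab)
  have hright : h * (δ₀ * ∫ y in b..b', φ y) ≤ ∫ y in a..b, φ y := by
    have := mul_integral_le_integral_of_kernel_integral_le hJc hJnn hJr hφc hφnn hK
      (c := b - h) (e := b) (by linarith) hbb' hb' (by linarith) (by linarith) (by linarith)
      (by linarith) (by linarith)
    rw [sub_sub_cancel] at this
    exact this.trans (hmono (b - h) b (by linarith) (by linarith) le_rfl)
  have hsplit : ∫ y in a'..b', φ y =
      (∫ y in a'..a, φ y) + (∫ y in a..b, φ y) + ∫ y in b..b', φ y := by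
    rw [intervalIntegral.integral_add_adjacent_intervals,
      intervalIntegral.integral_add_adjacent_intervals]
    all_goals apply hii <;> constructor <;> linarith
  have hhδ₀ : 0 < h * δ₀ := mul_pos hh hδ₀
  have hL : ∫ y in a'..a, φ y ≤ (∫ y in a..b, φ y) / (h * δ₀) := by
    rw [le_div_iff₀ hhδ₀]; linarith
  have hR : ∫ y in b..b', φ y ≤ (∫ y in a..b, φ y) / (h * δ₀) := by
    rw [le_div_iff₀ hhδ₀]; linarith
  have hfactor : (1 + 2 / (h * δ₀)) * ∫ y in a..b, φ y = (∫ y in a..b, φ y) +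
      (∫ y in a..b, φ y) / (h * δ₀) + (∫ y in a..b, φ y) / (h * δ₀) := by ring
  rw [hsplit, hfactor]
  linarith

theorem integral_window_le (hJc : Continuous J) (hJnn : ∀ u, 0 ≤ J u)
    (hJr : ∀ u, |u| ≤ r → δ₀ ≤ J u) (hφc : ContinuousOn φ (Icc 0 l))
    (hφnn : ∀ y ∈ Icc 0 l, 0 ≤ φ y) (hK : ∀ x ∈ Icc 0 l, ∫ y in 0..l, J (x - y) * φ y ≤ φ x)
    (hδ₀ : 0 < δ₀) {h : ℝ} (hh : 0 < h) (hhr : 2 * h ≤ r) (hhl : h ≤ l) {x : ℝ}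
    (hx : x ∈ Icc 0 l) (k : ℕ) :
    ∫ y in max 0 (x - (k + 1) * h)..min l (x + (k + 1) * h), φ y ≤
      (1 + 2 / (h * δ₀)) ^ k / δ₀ * φ x := by
  obtain ⟨hx0, hxl⟩ := hx
  induction k with
  | zero =>
    have := mul_integral_le_of_kernel_integral_le hJc hJnn hJr hφc hφnn (hK x ⟨hx0, hxl⟩)
      (a := max 0 (x - h)) (b := min l (x + h)) (le_max_left _ _)
      (max_le (le_min (by linarith) (by linarith)) (le_min (by linarith) (by linarith)))
      (min_le_left _ _) (le_max_of_le_right (by linarith)) ((min_le_right _ _).trans (by linarith))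
    rwa [Nat.cast_zero, zero_add, one_mul, pow_zero, div_mul_eq_mul_div, one_mul,
      le_div_iff₀' hδ₀]
  | succ k ih =>
    set s : ℝ := (k + 1) * h
    have hs : h ≤ s := le_mul_of_one_le_left hh.le (by linarith [k.cast_nonneg (α := ℝ)])
    have hk : ((k + 1 : ℕ) + 1 : ℝ) * h = s + h := by push_cast; ring
    have hwiden := integral_widen_le hJc hJnn hJr hφc hφnn hK hδ₀ hh hhr
      (a' := max 0 (x - (s + h))) (a := max 0 (x - s)) (b := min l (x + s))
      (b' := min l (x + (s + h))) (le_max_left _ _)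
      (by simp only [max_def]; split_ifs <;> linarith)
      (by simp only [max_def]; split_ifs <;> linarith)
      (by simp only [max_def, min_def]; split_ifs <;> linarith)
      (by simp only [min_def]; split_ifs <;> linarith)
      (by simp only [min_def]; split_ifs <;> linarith)
      (min_le_left _ _)
    rw [hk]
    calc _ ≤ (1 + 2 / (h * δ₀)) * ∫ y in max 0 (x - s)..min l (x + s), φ y := hwiden
      _ ≤ (1 + 2 / (h * δ₀)) * ((1 + 2 / (h * δ₀)) ^ k / δ₀ * φ x) :=
        mul_le_mul_of_nonneg_left ih (by positivity)
      _ = (1 + 2 / (h * δ₀)) ^ (k + 1) / δ₀ * φ x := by ring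

theorem integral_le_mul_of_kernel_integral_le (hJc : Continuous J) (hJnn : ∀ u, 0 ≤ J u)
    (hJr : ∀ u, |u| ≤ r → δ₀ ≤ J u) (hφc : ContinuousOn φ (Icc 0 l))
    (hφnn : ∀ y ∈ Icc 0 l, 0 ≤ φ y) (hK : ∀ x ∈ Icc 0 l, ∫ y in 0..l, J (x - y) * φ y ≤ φ x)
    (hδ₀ : 0 < δ₀) {h : ℝ} (hh : 0 < h) (hhr : 2 * h ≤ r) (hhl : h ≤ l) {k : ℕ}
    (hlk : l ≤ (k + 1) * h) {x : ℝ} (hx : x ∈ Icc 0 l) :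
    ∫ y in 0..l, φ y ≤ (1 + 2 / (h * δ₀)) ^ k / δ₀ * φ x := by
  have := integral_window_le hJc hJnn hJr hφc hφnn hK hδ₀ hh hhr hhl hx k
  rwa [max_eq_left (by linarith [hx.2]), min_eq_left (by linarith [hx.1])] at this

end Harnack

theorem eventually_forall_mul_comp_mul_lt {J : ℝ → ℝ} (hJc : Continuous J) (L : ℝ) {η : ℝ}
    (hη : 0 < η) : ∀ᶠ ρ in 𝓝 (1 : ℝ), ∀ u ∈ Icc (-L) L, ρ * J (ρ * u) < J u + η :=
  isCompact_Icc.eventually_forall_of_forall_eventually fun u _ =>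
    ContinuousAt.eventually_lt (f := fun z : ℝ × ℝ => z.1 * J (z.1 * z.2))
      (g := fun z => J z.2 + η) (by fun_prop) (by fun_prop) (by simpa using hη)

section Continuity

variable {d : ℝ} {J : ℝ → ℝ} {a : ℝ}

theorem exists_pos_forall_integral_le_mul_of_isSupersolution (hJc : Continuous J)
    (hJnn : ∀ u, 0 ≤ J u) (hJ0 : 0 < J 0) (hd : 0 < d) {m M : ℝ} (hm : 0 < m) :
    ∃ C > 0, ∀ l ∈ Icc m M, ∀ lam φ, IsSupersolution d J 0 l a lam φ → lam ≤ a →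
      ∀ x ∈ Icc 0 l, ∫ y in 0..l, φ y ≤ C * φ x := by
  obtain ⟨r₀, hr₀, hJr₀⟩ := Metric.eventually_nhds_iff.1
    (hJc.continuousAt.eventually (lt_mem_nhds (half_lt_self hJ0)))
  have hJr : ∀ u, |u| ≤ r₀ / 2 → J 0 / 2 ≤ J u := fun u hu =>
    (hJr₀ (by rw [Real.dist_eq, sub_zero]; linarith [half_lt_self hr₀])).le
  set h := min (r₀ / 4) m
  have hh : 0 < h := lt_min (by positivity) hm
  refine ⟨(1 + 2 / (h * (J 0 / 2))) ^ ⌈M / h⌉₊ / (J 0 / 2), by positivity,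
    fun l hl lam φ hφ hlam x hx => ?_⟩
  exact integral_le_mul_of_kernel_integral_le hJc hJnn hJr hφ.1 (fun y hy => (hφ.2.1 y hy).le)
    (fun y hy => hφ.kernel_le hd hlam hy) (half_pos hJ0) hh
    (by linarith [min_le_left (r₀ / 4) m]) ((min_le_right _ _).trans hl.1)
    (by nlinarith [hl.2, Nat.le_ceil (M / h), div_mul_cancel₀ M hh.ne']) hx

theorem exists_pos_forall_lambdaP_le_add (hJc : Continuous J) (hJnn : ∀ u, 0 ≤ J u)
    (hJ0 : 0 < J 0) (hJint : Integrable J) (hJ1 : ∫ u, J u = 1) (hd : 0 < d) {m M : ℝ}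
    (hm : 0 < m) {ε : ℝ} (hε : 0 < ε) :
    ∃ δ > 0, ∀ l₁ ∈ Icc m M, ∀ l₂ ∈ Icc m M, |l₂ - l₁| < δ →
      lambdaP d J 0 l₂ a ≤ lambdaP d J 0 l₁ a + ε := by
  obtain ⟨C, hC, harnack⟩ :=
    exists_pos_forall_integral_le_mul_of_isSupersolution (a := a) hJc hJnn hJ0 hd (M := M) hm
  set η := ε / (2 * d * C)
  obtain ⟨δ, hδ, hρ⟩ := Metric.eventually_nhds_iff.1
    (eventually_forall_mul_comp_mul_lt hJc M (η := η) (by positivity))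
  refine ⟨m * δ, by positivity, fun l₁ hl₁ l₂ hl₂ hl => ?_⟩
  have hl₁pos : 0 < l₁ := hm.trans_le hl₁.1
  rcases le_or_gt a (lambdaP d J 0 l₁ a + ε) with hle | hlt
  · exact (lambdaP_le_self hJnn hJint hJ1 hd.le (hm.trans_le hl₂.1).le).trans hle
  obtain ⟨lam, hlam, φ, hφ⟩ := exists_isSupersolution_lt hJnn hJint hJ1 hd.le
    (lt_add_of_pos_right (lambdaP d J 0 l₁ a) (half_pos hε))
  have hdist : dist (l₂ / l₁) 1 < δ := by
    rw [Real.dist_eq, div_sub_one hl₁pos.ne', abs_div, abs_of_pos hl₁pos, div_lt_iff₀ hl₁pos]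
    nlinarith [hl₁.1]
  have hdil := hφ.dilation hJc hd.le (div_pos (hm.trans_le hl₂.1) hl₁pos) (by positivity)
    (harnack l₁ hl₁ lam φ hφ (by linarith)) fun u hu =>
      (hρ hdist u (Icc_subset_Icc (neg_le_neg hl₁.2) hl₁.2 hu)).le
  rw [div_mul_cancel₀ l₂ hl₁pos.ne'] at hdil
  have hη : d * C * η = ε / 2 := by simp only [η]; field_simp
  linarith [lambdaP_le_of_isSupersolution hJnn hd.le (hm.trans_le hl₂.1).le hdil]

theorem uniformContinuousOn_lambdaP (hJc : Continuous J) (hJnn : ∀ u, 0 ≤ J u)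
    (hJ0 : 0 < J 0) (hJint : Integrable J) (hJ1 : ∫ u, J u = 1) (hd : 0 < d) {m M : ℝ}
    (hm : 0 < m) : UniformContinuousOn (fun l => lambdaP d J 0 l a) (Icc m M) := by
  refine Metric.uniformContinuousOn_iff.2 fun ε hε => ?_
  obtain ⟨δ, hδ, hle⟩ :=
    exists_pos_forall_lambdaP_le_add (a := a) hJc hJnn hJ0 hJint hJ1 hd hm (half_pos hε)
  refine ⟨δ, hδ, fun l₁ hl₁ l₂ hl₂ hl => ?_⟩
  rw [Real.dist_eq] at hl ⊢
  have h₁ := hle l₂ hl₂ l₁ hl₁ hl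
  have h₂ := hle l₁ hl₁ l₂ hl₂ (by rwa [abs_sub_comm])
  rw [abs_sub_lt_iff]
  constructor <;> linarith

theorem continuousOn_lambdaP (hJc : Continuous J) (hJnn : ∀ u, 0 ≤ J u)
    (hJ0 : 0 < J 0) (hJint : Integrable J) (hJ1 : ∫ u, J u = 1) (hd : 0 < d) :
    ContinuousOn (fun l => lambdaP d J 0 l a) (Ioi 0) := fun _ hl₀ =>
  ((uniformContinuousOn_lambdaP hJc hJnn hJ0 hJint hJ1 hd (half_pos hl₀)).continuousOn.continuousAt
    (Icc_mem_nhds (half_lt_self hl₀) (lt_two_mul_self hl₀))).continuousWithinAt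

end Continuity

theorem lambdaP_continuous_in_length_general
    (J : ℝ → ℝ) (hJc : Continuous J) (hJnn : ∀ x, 0 ≤ J x)
    (hJ0 : 0 < J 0) (hJint : Integrable J) (hJ1 : (∫ x, J x) = 1)
    (d : ℝ) (hd : 0 < d) (a0 : ℝ) :
    ∀ l0 : ℝ, 0 < l0 →
      Filter.Tendsto (fun l => lambdaP d J 0 l a0) (nhdsWithin l0 (Set.Ioi 0))
        (nhds (lambdaP d J 0 l0 a0)) :=
  continuousOn_lambdaP hJc hJnn hJ0 hJint hJ1 hd

/-- **Continuity of the principal eigenvalue in the interval length**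
(Proposition 3.4(i) of Cao–Du–Li–Li). -/
theorem lambdaP_continuous_in_length
    (J : ℝ → ℝ) (hJc : Continuous J) (hJnn : ∀ x, 0 ≤ J x)
    (hJeven : ∀ x, J (-x) = J x) (hJbdd : BddAbove (Set.range J))
    (hJ0 : 0 < J 0) (hJint : Integrable J) (hJ1 : (∫ x, J x) = 1)
    (d : ℝ) (hd : 0 < d) (a0 : ℝ) (ha0 : 0 < a0) :
    ∀ l0 : ℝ, 0 < l0 →
      Filter.Tendsto (fun l => lambdaP d J 0 l a0) (nhdsWithin l0 (Set.Ioi 0))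
        (nhds (lambdaP d J 0 l0 a0)) :=
  lambdaP_continuous_in_length_general J hJc hJnn hJ0 hJint hJ1 d hd a0
end

section
/- (Limit of the principal eigenvalue on short intervals) Let a0 > 0 be a constant. Then λ_p(ℓ) := λ_p(L_{(0,ℓ)} + a0) satisfies λ_p(ℓ) → a0 − d as ℓ → 0⁺; more precisely, if λ_p(ℓ) is attained by a strictly positive continuous eigenfunction φ (i.e., d∫_0^ℓ J(x−y)φ(y)dy − dφ(x) + a0φ(x) = λ_p(ℓ)φ(x) on [0,ℓ]), then |λ_p(ℓ) − a0 + d| ≤ d·(sup_ℝ J)·ℓ. -/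
/-!
Testing with the constant function `φ = 1` and bounding the kernel by `M = sup J` gives
`λ_p ≤ a - d + d M (l₂ - l₁)`. Conversely, every admissible `λ` satisfies `λ ≥ a - d`: evaluate
its test inequality at any point and drop the nonnegative integral term. Hence `λ_p(ℓ)` lies
within `d M ℓ` of `a - d`, and the limit follows by squeezing.
-/

open MeasureTheory Set Filter Topology

namespace LambdaP

def admissible (d : ℝ) (J : ℝ → ℝ) (l1 l2 a : ℝ) : Set ℝ :=
  {lam : ℝ | ∃ φ : ℝ → ℝ, ContinuousOn φ (Set.Icc l1 l2) ∧
    (∀ x ∈ Set.Icc l1 l2, 0 < φ x) ∧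
    ∀ x ∈ Set.Icc l1 l2,
      d * ((∫ y in l1..l2, J (x - y) * φ y) - φ x) + a * φ x ≤ lam * φ x}

theorem lambdaP_eq_sInf_admissible (d : ℝ) (J : ℝ → ℝ) (l1 l2 a : ℝ) :
    lambdaP d J l1 l2 a = sInf (admissible d J l1 l2 a) :=
  rfl

variable {d : ℝ} {J : ℝ → ℝ} {l1 l2 a : ℝ}

theorem sub_le_of_mem_admissible (hJ : ∀ x, 0 ≤ J x) (hd : 0 ≤ d) (hl : l1 ≤ l2) {lam : ℝ}
    (hlam : lam ∈ admissible d J l1 l2 a) : a - d ≤ lam := by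
  obtain ⟨φ, -, hφpos, hφ⟩ := hlam
  have hx : l1 ∈ Icc l1 l2 := left_mem_Icc.mpr hl
  have hint : 0 ≤ ∫ y in l1..l2, J (l1 - y) * φ y :=
    intervalIntegral.integral_nonneg hl fun y hy => mul_nonneg (hJ _) (hφpos y hy).le
  have h := hφ l1 hx
  have hφ0 := hφpos l1 hx
  nlinarith [mul_nonneg hd hint]

theorem integral_comp_sub_le {M : ℝ} (hJ : ∀ x, 0 ≤ J x) (hJM : ∀ x, J x ≤ M)
    (hl : l1 ≤ l2) (x : ℝ) : ∫ y in l1..l2, J (x - y) ≤ M * (l2 - l1) := by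
  have h := intervalIntegral.norm_integral_le_of_norm_le_const (a := l1) (b := l2)
    (f := fun y => J (x - y)) fun y _ => by
      rw [Real.norm_of_nonneg (hJ _)]
      exact hJM _
  rw [abs_of_nonneg (sub_nonneg.mpr hl)] at h
  exact (le_abs_self _).trans h

theorem mem_admissible_of_le {M : ℝ} (hJ : ∀ x, 0 ≤ J x) (hJM : ∀ x, J x ≤ M) (hd : 0 ≤ d)
    (hl : l1 ≤ l2) : a - d + d * M * (l2 - l1) ∈ admissible d J l1 l2 a := by
  refine ⟨fun _ => 1, continuousOn_const, fun _ _ => one_pos, fun x _ => ?_⟩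
  have h := mul_le_mul_of_nonneg_left (integral_comp_sub_le hJ hJM hl x) hd
  simp only [mul_one] at h ⊢
  linarith

theorem abs_lambdaP_sub_le (hJ : ∀ x, 0 ≤ J x) (hJbdd : BddAbove (range J)) (hd : 0 ≤ d)
    (hl : l1 ≤ l2) : |lambdaP d J l1 l2 a - a + d| ≤ d * (⨆ x, J x) * (l2 - l1) := by
  have hJM : ∀ x, J x ≤ ⨆ x, J x := le_ciSup hJbdd
  have hmem := mem_admissible_of_le (a := a) hJ hJM hd hl
  have hlower : ∀ lam ∈ admissible d J l1 l2 a, a - d ≤ lam :=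
    fun _ => sub_le_of_mem_admissible hJ hd hl
  rw [lambdaP_eq_sInf_admissible]
  have hle : sInf (admissible d J l1 l2 a) ≤ a - d + d * (⨆ x, J x) * (l2 - l1) :=
    csInf_le ⟨a - d, hlower⟩ hmem
  have hge : a - d ≤ sInf (admissible d J l1 l2 a) := le_csInf ⟨_, hmem⟩ hlower
  have hwidth : 0 ≤ d * (⨆ x, J x) * (l2 - l1) :=
    mul_nonneg (mul_nonneg hd ((hJ 0).trans (hJM 0))) (sub_nonneg.mpr hl)
  rw [abs_le]
  constructor <;> linarith

end LambdaP

open LambdaP in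
theorem lambdaP_limit_short_intervals_general
    (J : ℝ → ℝ) (hJnn : ∀ x, 0 ≤ J x)
    (hJbdd : BddAbove (Set.range J))
    (d : ℝ) (hd : 0 < d) (a0 : ℝ) :
    Filter.Tendsto (fun l => lambdaP d J 0 l a0) (nhdsWithin 0 (Set.Ioi 0))
      (nhds (a0 - d)) ∧
    ∀ l : ℝ, 0 < l → ∀ φ : ℝ → ℝ, ContinuousOn φ (Set.Icc 0 l) →
      (∀ x ∈ Set.Icc 0 l, 0 < φ x) →
      (∀ x ∈ Set.Icc 0 l,
        d * (∫ y in (0:ℝ)..l, J (x - y) * φ y) - d * φ x + a0 * φ x =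
          lambdaP d J 0 l a0 * φ x) →
      |lambdaP d J 0 l a0 - a0 + d| ≤ d * (⨆ x, J x) * l := by
  have hbound : ∀ l : ℝ, 0 < l → |lambdaP d J 0 l a0 - a0 + d| ≤ d * (⨆ x, J x) * l :=
    fun l hl => by simpa using abs_lambdaP_sub_le (a := a0) hJnn hJbdd hd.le hl.le
  refine ⟨?_, fun l hl _ _ _ _ => hbound l hl⟩
  have hwidth : Tendsto (fun l : ℝ => d * (⨆ x, J x) * l) (𝓝[>] 0) (𝓝 0) :=
    tendsto_nhdsWithin_of_tendsto_nhds (by simpa using (tendsto_id (x := 𝓝 (0:ℝ))).const_mul _)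
  rw [tendsto_iff_norm_sub_tendsto_zero]
  refine squeeze_zero' (.of_forall fun _ => norm_nonneg _) ?_ hwidth
  filter_upwards [self_mem_nhdsWithin] with l hl
  simpa [Real.norm_eq_abs, sub_add] using hbound l hl

/-- **Limit of the principal eigenvalue on short intervals**
(Proposition 3.4(iii) of Cao–Du–Li–Li). -/
theorem lambdaP_limit_short_intervals
    (J : ℝ → ℝ) (hJc : Continuous J) (hJnn : ∀ x, 0 ≤ J x)
    (hJeven : ∀ x, J (-x) = J x) (hJbdd : BddAbove (Set.range J))
    (hJ0 : 0 < J 0) (hJint : Integrable J) (hJ1 : (∫ x, J x) = 1)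
    (d : ℝ) (hd : 0 < d) (a0 : ℝ) (ha0 : 0 < a0) :
    Filter.Tendsto (fun l => lambdaP d J 0 l a0) (nhdsWithin 0 (Set.Ioi 0))
      (nhds (a0 - d)) ∧
    ∀ l : ℝ, 0 < l → ∀ φ : ℝ → ℝ, ContinuousOn φ (Set.Icc 0 l) →
      (∀ x ∈ Set.Icc 0 l, 0 < φ x) →
      (∀ x ∈ Set.Icc 0 l,
        d * (∫ y in (0:ℝ)..l, J (x - y) * φ y) - d * φ x + a0 * φ x =
          lambdaP d J 0 l a0 * φ x) →
      |lambdaP d J 0 l a0 - a0 + d| ≤ d * (⨆ x, J x) * l :=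
  lambdaP_limit_short_intervals_general J hJnn hJbdd d hd a0
end

section
/- (Convergence of steady states on expanding intervals) There exists L > 0 such that λ_p(L_{(ℓ1,ℓ2)} + f'(0)) > 0 for every bounded interval (ℓ1,ℓ2) with ℓ2 − ℓ1 > L. Assume moreover that for each bounded interval I = (ℓ1,ℓ2) with ℓ2 − ℓ1 > L the steady-state equation d(∫_{ℓ1}^{ℓ2} J(x−y) u(y) dy − u(x)) + f(u(x)) = 0 on [ℓ1,ℓ2] admits a unique positive continuous solution u_I, that u_I ≤ K0 on I, and that u_{I1} ≤ u_{I2} on I1 whenever I1 ⊆ I2 (both of length > L). Then u_{(ℓ1,ℓ2)} → v0 locally uniformly in ℝ as ℓ1 → −∞ and ℓ2 → +∞, where v0 is the unique positive zero of f. -/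
open MeasureTheory Set Filter Topology

section Kernel

variable {J : ℝ → ℝ}

theorem integral_integral_le_integral_integral_mul_div (hJc : Continuous J)
    (hJnn : ∀ x, 0 ≤ J x) (hJeven : ∀ x, J (-x) = J x) {s : Set ℝ} (hs : IsCompact s)
    {φ : ℝ → ℝ} (hφc : ContinuousOn φ s) (hφpos : ∀ x ∈ s, 0 < φ x) :
    ∫ x in s, ∫ y in s, J (x - y) ≤ ∫ x in s, ∫ y in s, J (x - y) * φ y / φ x := by
  set G : ℝ × ℝ → ℝ := fun p => J (p.1 - p.2) * φ p.2 / φ p.1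
  have hmem : ∀ p ∈ s ×ˢ s, 0 < φ p.1 ∧ 0 < φ p.2 := fun p hp => ⟨hφpos _ hp.1, hφpos _ hp.2⟩
  have hJQ : IntegrableOn (fun p : ℝ × ℝ => J (p.1 - p.2)) (s ×ˢ s) :=
    (hJc.comp (continuous_fst.sub continuous_snd)).continuousOn.integrableOn_compact (hs.prod hs)
  have hGQ : IntegrableOn G (s ×ˢ s) := by
    refine ContinuousOn.integrableOn_compact (hs.prod hs) ?_
    refine ((hJc.comp (continuous_fst.sub continuous_snd)).continuousOn.mul
      (hφc.comp continuous_snd.continuousOn fun p hp => hp.2)).div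
      (hφc.comp continuous_fst.continuousOn fun p hp => hp.1) fun p hp => (hmem p hp).1.ne'
  have hGQ' : IntegrableOn (G ∘ Prod.swap) (s ×ˢ s) := by
    rw [Measure.volume_eq_prod] at hGQ ⊢; exact hGQ.swap
  have hamgm : ∀ p ∈ s ×ˢ s, 2 * J (p.1 - p.2) ≤ G p + (G ∘ Prod.swap) p := by
    rintro ⟨x, y⟩ hp
    obtain ⟨hx, hy⟩ := hmem _ hp
    have hJxy : J (y - x) = J (x - y) := by rw [← hJeven, neg_sub]
    simp only [G, Function.comp_apply, Prod.swap, hJxy]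
    rw [div_add_div _ _ hx.ne' hy.ne', le_div_iff₀ (mul_pos hx hy)]
    nlinarith [mul_nonneg (hJnn (x - y)) (sq_nonneg (φ x - φ y))]
  have hswap : ∫ p in s ×ˢ s, G p.swap = ∫ p in s ×ˢ s, G p := by
    rw [Measure.volume_eq_prod]; exact setIntegral_prod_swap s s G
  have hsym : ∫ p in s ×ˢ s, J (p.1 - p.2) ≤ ∫ p in s ×ˢ s, G p := by
    have := setIntegral_mono_on (hJQ.const_mul 2) (hGQ.add hGQ') (hs.prod hs).measurableSet hamgm
    rw [integral_const_mul, Pi.add_def, integral_add hGQ hGQ'] at this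
    simp only [Function.comp_apply, hswap] at this
    linarith
  rw [Measure.volume_eq_prod] at hJQ hGQ hsym
  rwa [← setIntegral_prod _ hJQ, ← setIntegral_prod G hGQ]

theorem mul_intervalIntegral_le_integral_integral (hJc : Continuous J) (hJnn : ∀ x, 0 ≤ J x)
    {R l1 l2 : ℝ} (hR : 0 ≤ R) (hl : 2 * R ≤ l2 - l1) :
    (l2 - l1 - 2 * R) * ∫ t in -R..R, J t ≤ ∫ x in Icc l1 l2, ∫ y in Icc l1 l2, J (x - y) := by
  have hinner : ∀ x ∈ Icc l1 l2,
      (Icc (l1 + R) (l2 - R)).indicator (fun _ => ∫ t in -R..R, J t) x ≤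
        ∫ y in Icc l1 l2, J (x - y) := by
    intro x hx
    by_cases hxR : x ∈ Icc (l1 + R) (l2 - R)
    · rw [indicator_of_mem hxR]
      calc ∫ t in -R..R, J t = ∫ y in Icc (x - R) (x + R), J (x - y) := by
            rw [integral_Icc_eq_integral_Ioc, ← intervalIntegral.integral_of_le (by linarith),
              intervalIntegral.integral_comp_sub_left (fun t => J t) x]
            simp
        _ ≤ ∫ y in Icc l1 l2, J (x - y) :=
            setIntegral_mono_set
              ((hJc.comp (continuous_sub_left x)).continuousOn.integrableOn_compact isCompact_Icc)
              (Eventually.of_forall fun y => hJnn _)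
              (Eventually.of_forall (Icc_subset_Icc (by linarith [hxR.1]) (by linarith [hxR.2])))
    · rw [indicator_of_notMem hxR]
      exact setIntegral_nonneg measurableSet_Icc fun y _ => hJnn _
  have hint : IntegrableOn (fun x => ∫ y in Icc l1 l2, J (x - y)) (Icc l1 l2) :=
    (continuous_parametric_integral_of_continuous (f := fun x y => J (x - y))
      (hJc.comp continuous_sub) isCompact_Icc).continuousOn.integrableOn_compact isCompact_Icc
  calc (l2 - l1 - 2 * R) * ∫ t in -R..R, J t
      = ∫ x in Icc l1 l2, (Icc (l1 + R) (l2 - R)).indicator (fun _ => ∫ t in -R..R, J t) x := by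
        rw [setIntegral_indicator measurableSet_Icc,
          inter_eq_self_of_subset_right (Icc_subset_Icc (by linarith) (by linarith)),
          setIntegral_const, Real.volume_real_Icc_of_le (by linarith), smul_eq_mul]
        ring_nf
    _ ≤ ∫ x in Icc l1 l2, ∫ y in Icc l1 l2, J (x - y) :=
        setIntegral_mono_on ((integrableOn_const measure_Icc_lt_top.ne).indicator
          measurableSet_Icc) hint measurableSet_Icc hinner

theorem mul_integral_integral_le_of_supersolution (hJc : Continuous J) (hJnn : ∀ x, 0 ≤ J x)
    (hJeven : ∀ x, J (-x) = J x) {d a lam l1 l2 : ℝ} (hd : 0 ≤ d) (hl : l1 ≤ l2) {φ : ℝ → ℝ}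
    (hφc : ContinuousOn φ (Icc l1 l2)) (hφpos : ∀ x ∈ Icc l1 l2, 0 < φ x)
    (hφ : ∀ x ∈ Icc l1 l2,
      d * ((∫ y in l1..l2, J (x - y) * φ y) - φ x) + a * φ x ≤ lam * φ x) :
    d * ∫ x in Icc l1 l2, ∫ y in Icc l1 l2, J (x - y) ≤ (lam - a + d) * (l2 - l1) := by
  have hpointwise : ∀ x ∈ Icc l1 l2, d * ∫ y in Icc l1 l2, J (x - y) * φ y / φ x ≤ lam - a + d := by
    intro x hx
    have := hφ x hx
    rw [intervalIntegral.integral_of_le hl, ← integral_Icc_eq_integral_Ioc] at this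
    rw [integral_div, mul_div_assoc', div_le_iff₀ (hφpos x hx)]
    linarith
  calc d * ∫ x in Icc l1 l2, ∫ y in Icc l1 l2, J (x - y)
      ≤ d * ∫ x in Icc l1 l2, ∫ y in Icc l1 l2, J (x - y) * φ y / φ x :=
        mul_le_mul_of_nonneg_left (integral_integral_le_integral_integral_mul_div hJc hJnn hJeven
          isCompact_Icc hφc hφpos) hd
    _ = ∫ x in Icc l1 l2, d * ∫ y in Icc l1 l2, J (x - y) * φ y / φ x := (integral_const_mul _ _).symm
    _ ≤ ∫ _ in Icc l1 l2, lam - a + d := by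
        refine integral_mono_of_nonneg (ae_restrict_of_forall_mem measurableSet_Icc fun x hx => ?_)
          (integrableOn_const measure_Icc_lt_top.ne)
          (ae_restrict_of_forall_mem measurableSet_Icc hpointwise)
        exact mul_nonneg hd (setIntegral_nonneg measurableSet_Icc fun y hy =>
          div_nonneg (mul_nonneg (hJnn _) (hφpos y hy).le) (hφpos x hx).le)
    _ = (lam - a + d) * (l2 - l1) := by
        rw [setIntegral_const, Real.volume_real_Icc_of_le hl, smul_eq_mul, mul_comm]

theorem exists_forall_lambdaP_pos (hJc : Continuous J) (hJnn : ∀ x, 0 ≤ J x)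
    (hJeven : ∀ x, J (-x) = J x) (hJint : Integrable J) (hJ1 : ∫ x, J x = 1) {d a : ℝ}
    (hd : 0 < d) (ha : 0 < a) :
    ∃ L > 0, ∀ l1 l2 : ℝ, L < l2 - l1 → 0 < lambdaP d J l1 l2 a := by
  obtain ⟨R, hR, hRJ⟩ : ∃ R, 0 ≤ R ∧ 1 - a / (4 * d) ≤ ∫ t in -R..R, J t := by
    have hlim := intervalIntegral_tendsto_integral hJint tendsto_neg_atTop_atBot tendsto_id
    rw [hJ1] at hlim
    exact ((eventually_ge_atTop 0).and
      (hlim.eventually (eventually_ge_nhds (sub_lt_self 1 (by positivity))))).exists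
  -- `λ ≥ a - d (1 - ∫_{-R}^{R} J) - 2 d R / ℓ ≥ a - a / 4 - a / 4` once `ℓ > 8 d R / a`.
  refine ⟨2 * R + 8 * d * R / a + 1, by positivity, fun l1 l2 hl => ?_⟩
  have hRa : 0 ≤ 8 * d * R / a := by positivity
  have h2R : 2 * R ≤ l2 - l1 := by linarith
  have hdR : 8 * d * R < a * (l2 - l1) := (div_lt_iff₀' ha).1 (by linarith)
  have hl12 : l1 ≤ l2 := by linarith
  refine (half_pos ha).trans_le (le_csInf ⟨a, fun _ => 1, continuousOn_const, fun _ _ => one_pos,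
    fun x _ => ?_⟩ ?_)
  · have hJx : ∫ y in l1..l2, J (x - y) * 1 ≤ 1 := by
      simp only [mul_one]
      rw [← hJ1, ← integral_sub_left_eq_self J volume x, intervalIntegral.integral_of_le hl12]
      exact setIntegral_le_integral (hJint.comp_sub_left x) (Eventually.of_forall fun y => hJnn _)
    nlinarith
  · rintro lam ⟨φ, hφc, hφpos, hφ⟩
    have hbound : (l2 - l1 - 2 * R) * (d - a / 4) ≤ (lam - a + d) * (l2 - l1) :=
      calc (l2 - l1 - 2 * R) * (d - a / 4) = d * ((l2 - l1 - 2 * R) * (1 - a / (4 * d))) := by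
            field_simp
        _ ≤ d * ((l2 - l1 - 2 * R) * ∫ t in -R..R, J t) := by
            gcongr
        _ ≤ d * ∫ x in Icc l1 l2, ∫ y in Icc l1 l2, J (x - y) := by
            gcongr; exact mul_intervalIntegral_le_integral_integral hJc hJnn hR h2R
        _ ≤ (lam - a + d) * (l2 - l1) :=
            mul_integral_integral_le_of_supersolution hJc hJnn hJeven hd.le hl12 hφc hφpos hφ
    have : a / 2 * (l2 - l1) ≤ lam * (l2 - l1) := by nlinarith [mul_nonneg ha.le hR]
    exact le_of_mul_le_mul_right this (by linarith)

end Kernel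

def IsSteadyState (d : ℝ) (J f : ℝ → ℝ) (l1 l2 : ℝ) (w : ℝ → ℝ) : Prop :=
  ∀ x ∈ Icc l1 l2, d * ((∫ y in l1..l2, J (x - y) * w y) - w x) + f (w x) = 0

theorem IsSteadyState.comp_add_right {d : ℝ} {J f w : ℝ → ℝ} {l1 l2 b : ℝ}
    (hw : IsSteadyState d J f (l1 + b) (l2 + b) w) :
    IsSteadyState d J f l1 l2 (fun x => w (x + b)) := by
  intro x hx
  have hxb : x + b ∈ Icc (l1 + b) (l2 + b) := ⟨by linarith [hx.1], by linarith [hx.2]⟩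
  convert hw (x + b) hxb using 3
  rw [← intervalIntegral.integral_comp_add_right]
  simp only [add_sub_add_right_eq_sub]

theorem shift_eq_of_unique {d : ℝ} {J f w u : ℝ → ℝ} {l1 l2 b : ℝ}
    (hc : ContinuousOn w (Icc (l1 + b) (l2 + b))) (hpos : ∀ x ∈ Icc (l1 + b) (l2 + b), 0 < w x)
    (hw : IsSteadyState d J f (l1 + b) (l2 + b) w)
    (huniq : ∀ w', ContinuousOn w' (Icc l1 l2) → (∀ x ∈ Icc l1 l2, 0 < w' x) →
      IsSteadyState d J f l1 l2 w' → ∀ x ∈ Icc l1 l2, w' x = u x) :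
    ∀ x ∈ Icc l1 l2, w (x + b) = u x := by
  have hmaps : MapsTo (· + b) (Icc l1 l2) (Icc (l1 + b) (l2 + b)) :=
    fun x hx => ⟨by linarith [hx.1], by linarith [hx.2]⟩
  exact huniq _ (hc.comp (continuous_add_const b).continuousOn hmaps)
    (fun x hx => hpos _ (hmaps hx)) hw.comp_add_right

theorem tendsto_intervalIntegral_mul_of_tendsto {g : ℝ → ℝ} (hg : Integrable g)
    {u : ℝ → ℝ → ℝ} {v M : ℝ} (hM : 0 ≤ M)
    (hcont : ∀ᶠ r in atTop, ContinuousOn (u r) (Icc (-r) r))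
    (hbound : ∀ᶠ r in atTop, ∀ y ∈ Icc (-r) r, |u r y| ≤ M)
    (hlim : ∀ y, Tendsto (fun r => u r y) atTop (𝓝 v)) :
    Tendsto (fun r => ∫ y in (-r)..r, g y * u r y) atTop (𝓝 ((∫ y, g y) * v)) := by
  have hind : ∀ᶠ r in atTop, ∫ y in (-r)..r, g y * u r y =
      ∫ y, (Ioc (-r) r).indicator (fun y => g y * u r y) y := by
    filter_upwards [eventually_ge_atTop 0] with r hr
    rw [intervalIntegral.integral_of_le (by linarith), integral_indicator measurableSet_Ioc]
  rw [← integral_mul_const]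
  refine Tendsto.congr' (EventuallyEq.symm hind) ?_
  refine tendsto_integral_filter_of_dominated_convergence (fun y => ‖g y‖ * M) ?_ ?_
    (hg.norm.mul_const M) (ae_of_all _ fun y => ?_)
  · filter_upwards [hcont] with r hr
    exact (aestronglyMeasurable_indicator_iff measurableSet_Ioc).2
      (hg.aestronglyMeasurable.restrict.mul
        ((hr.mono Ioc_subset_Icc_self).aestronglyMeasurable measurableSet_Ioc))
  · filter_upwards [hbound] with r hr
    refine ae_of_all _ fun y => ?_
    by_cases hy : y ∈ Ioc (-r) r
    · rw [indicator_of_mem hy, norm_mul, Real.norm_eq_abs (u r y)]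
      exact mul_le_mul_of_nonneg_left (hr y (Ioc_subset_Icc_self hy)) (norm_nonneg _)
    · rw [indicator_of_notMem hy, norm_zero]
      positivity
  · refine (tendsto_const_nhds.mul (hlim y)).congr' ?_
    filter_upwards [eventually_gt_atTop |y|] with r hr
    have hy : y ∈ Ioc (-r) r := ⟨by linarith [neg_abs_le y], by linarith [le_abs_self y]⟩
    rw [indicator_of_mem hy]

theorem map_eq_zero_of_tendsto_isSteadyState {d : ℝ} {J f : ℝ → ℝ} (hJint : Integrable J)
    (hJ1 : ∫ x, J x = 1) {u : ℝ → ℝ → ℝ} {v M : ℝ} (hf : ContinuousAt f v) (hM : 0 ≤ M)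
    (hsol : ∀ᶠ r in atTop, IsSteadyState d J f (-r) r (u r))
    (hcont : ∀ᶠ r in atTop, ContinuousOn (u r) (Icc (-r) r))
    (hbound : ∀ᶠ r in atTop, ∀ y ∈ Icc (-r) r, |u r y| ≤ M)
    (hlim : ∀ y, Tendsto (fun r => u r y) atTop (𝓝 v)) :
    f v = 0 := by
  have hint := tendsto_intervalIntegral_mul_of_tendsto (hJint.comp_sub_left 0) hM hcont hbound hlim
  rw [integral_sub_left_eq_self J volume 0, hJ1, one_mul] at hint
  have hlhs := ((hint.sub (hlim 0)).const_mul d).add (hf.tendsto.comp (hlim 0))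
  have hzero : ∀ᶠ r in atTop, d * ((∫ y in (-r)..r, J (0 - y) * u r y) - u r 0) + f (u r 0) = 0 := by
    filter_upwards [hsol, eventually_ge_atTop 0] with r hr hr0
    exact hr 0 ⟨by linarith, hr0⟩
  simpa using tendsto_nhds_unique hlhs (tendsto_const_nhds.congr' (EventuallyEq.symm hzero))

section MonotoneFamily

def IsShiftInvariant (L : ℝ) (U : ℝ → ℝ → ℝ → ℝ) : Prop :=
  ∀ l1 l2 b, L < l2 - l1 → ∀ x ∈ Icc l1 l2, U (l1 + b) (l2 + b) (x + b) = U l1 l2 x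

def IsMonotoneInDomain (L : ℝ) (U : ℝ → ℝ → ℝ → ℝ) : Prop :=
  ∀ l1 l2 l1' l2', L < l2 - l1 → L < l2' - l1' → l1' ≤ l1 → l2 ≤ l2' →
    ∀ x ∈ Icc l1 l2, U l1 l2 x ≤ U l1' l2' x

variable {U : ℝ → ℝ → ℝ → ℝ} {L : ℝ}

theorem centered_le_apply (hL : 0 ≤ L)
    (hshift : IsShiftInvariant L U)
    (hmono : IsMonotoneInDomain L U)
    {r l1 l2 x : ℝ} (hr : L < 2 * r) (hl : L < l2 - l1) (h1 : l1 ≤ x - r) (h2 : x + r ≤ l2) :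
    U (-r) r 0 ≤ U l1 l2 x := by
  rw [← hshift l1 l2 (-x) hl x ⟨by linarith, by linarith⟩, add_neg_cancel]
  exact hmono (-r) r _ _ (by linarith) (by linarith) (by linarith) (by linarith) 0
    ⟨by linarith, by linarith⟩

theorem apply_le_centered
    (hshift : IsShiftInvariant L U)
    (hmono : IsMonotoneInDomain L U)
    {r l1 l2 x : ℝ} (hr : L < 2 * r) (hl : L < l2 - l1) (hx : x ∈ Icc l1 l2)
    (h1 : x - r ≤ l1) (h2 : l2 ≤ x + r) :
    U l1 l2 x ≤ U (-r) r 0 := by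
  rw [← hshift l1 l2 (-x) hl x hx, add_neg_cancel]
  exact hmono _ _ (-r) r (by linarith) (by linarith) (by linarith) (by linarith) 0
    ⟨by linarith [hx.1], by linarith [hx.2]⟩

theorem exists_tendsto_centered (hL : 0 ≤ L)
    (hshift : IsShiftInvariant L U)
    (hmono : IsMonotoneInDomain L U)
    {M : ℝ} (hM : ∀ r, L < 2 * r → U (-r) r 0 ≤ M) :
    ∃ v, Tendsto (fun r => U (-r) r 0) atTop (𝓝 v) ∧ ∀ r, L < 2 * r → U (-r) r 0 ≤ v := by
  have hmax : ∀ r, L < 2 * max r (L + 1) := fun r => by linarith [le_max_right r (L + 1)]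
  set g : ℝ → ℝ := fun r => U (-max r (L + 1)) (max r (L + 1)) 0
  have hg : Monotone g := fun r s hrs =>
    centered_le_apply hL hshift hmono (hmax r) (by linarith [hmax s])
      (by linarith [max_le_max_right (L + 1) hrs]) (by linarith [max_le_max_right (L + 1) hrs])
  have hgv := tendsto_atTop_ciSup hg ⟨M, forall_mem_range.2 fun r => hM _ (hmax r)⟩
  refine ⟨⨆ r, g r, hgv.congr' ?_, fun r hr => ?_⟩
  · filter_upwards [eventually_ge_atTop (L + 1)] with r hr
    simp [g, max_eq_left hr]
  · exact (centered_le_apply hL hshift hmono hr (by linarith [hmax r]) (by simp)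
      (by simp)).trans (hg.ge_of_tendsto hgv r)

theorem apply_le_of_tendsto_centered
    (hshift : IsShiftInvariant L U)
    (hmono : IsMonotoneInDomain L U)
    {v : ℝ} (hv : Tendsto (fun r => U (-r) r 0) atTop (𝓝 v))
    {l1 l2 x : ℝ} (hl : L < l2 - l1) (hx : x ∈ Icc l1 l2) :
    U l1 l2 x ≤ v := by
  refine ge_of_tendsto hv ?_
  filter_upwards [eventually_gt_atTop (L / 2), eventually_ge_atTop (l2 - l1)] with r hr hr'
  exact apply_le_centered hshift hmono (by linarith) hl hx (by linarith [hx.2])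
    (by linarith [hx.1])

theorem tendsto_apply_of_tendsto_centered (hL : 0 ≤ L)
    (hshift : IsShiftInvariant L U)
    (hmono : IsMonotoneInDomain L U)
    {v : ℝ} (hv : Tendsto (fun r => U (-r) r 0) atTop (𝓝 v)) (y : ℝ) :
    Tendsto (fun r => U (-r) r y) atTop (𝓝 v) := by
  have hlower : Tendsto (fun r => U (-(r - |y|)) (r - |y|) 0) atTop (𝓝 v) :=
    hv.comp (tendsto_atTop_add_const_right atTop (-|y|) tendsto_id)
  refine tendsto_of_tendsto_of_tendsto_of_le_of_le' hlower tendsto_const_nhds ?_ ?_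
  · filter_upwards [eventually_gt_atTop (L / 2 + |y|)] with r hr
    exact centered_le_apply hL hshift hmono (by linarith) (by linarith [abs_nonneg y])
      (by linarith [neg_abs_le y]) (by linarith [le_abs_self y])
  · filter_upwards [eventually_gt_atTop (L / 2 + |y|)] with r hr
    exact apply_le_of_tendsto_centered hshift hmono hv (by linarith [abs_nonneg y])
      ⟨by linarith [neg_abs_le y], by linarith [le_abs_self y]⟩

theorem exists_forall_abs_sub_lt_of_tendsto_centered (hL : 0 ≤ L)
    (hshift : IsShiftInvariant L U)
    (hmono : IsMonotoneInDomain L U)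
    {v : ℝ} (hv : Tendsto (fun r => U (-r) r 0) atTop (𝓝 v)) :
    ∀ ε > 0, ∀ A > 0, ∃ R > 0, ∀ l1 l2 : ℝ, l1 < -R → R < l2 →
      ∀ x ∈ Icc (-A) A, |U l1 l2 x - v| < ε := by
  intro ε hε A hA
  obtain ⟨r, hr, hvr⟩ := ((eventually_gt_atTop (L / 2)).and
    (hv.eventually (eventually_gt_nhds (sub_lt_self v hε)))).exists
  refine ⟨r + A, by linarith, fun l1 l2 hl1 hl2 x hx => abs_sub_lt_iff.2 ⟨?_, ?_⟩⟩
  · have := apply_le_of_tendsto_centered hshift hmono hv (by linarith : L < l2 - l1)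
      (⟨by linarith [hx.1], by linarith [hx.2]⟩ : x ∈ Icc l1 l2)
    linarith
  · have := centered_le_apply hL hshift hmono (by linarith) (by linarith : L < l2 - l1)
      (by linarith [hx.1] : l1 ≤ x - r) (by linarith [hx.2])
    linarith

end MonotoneFamily

theorem steady_states_converge_on_expanding_intervals_general
    (J : ℝ → ℝ) (hJc : Continuous J) (hJnn : ∀ x, 0 ≤ J x)
    (hJeven : ∀ x, J (-x) = J x)
    (hJint : Integrable J) (hJ1 : (∫ x, J x) = 1)
    (d : ℝ) (hd : 0 < d)
    (f : ℝ → ℝ) (hfc : ContinuousOn f (Set.Ici 0))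
    (K0 : ℝ) (hK0 : 0 < K0)
    (fp0 : ℝ) (hfp0pos : 0 < fp0)
    (v0 : ℝ)
    (hv0uniq : ∀ v, 0 < v → f v = 0 → v = v0) :
    ∃ L > 0,
      (∀ l1 l2 : ℝ, L < l2 - l1 → 0 < lambdaP d J l1 l2 fp0) ∧
      ∀ U : ℝ → ℝ → ℝ → ℝ,
        (∀ l1 l2 : ℝ, L < l2 - l1 →
          ContinuousOn (U l1 l2) (Set.Icc l1 l2) ∧
          (∀ x ∈ Set.Icc l1 l2, 0 < U l1 l2 x ∧ U l1 l2 x ≤ K0) ∧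
          (∀ x ∈ Set.Icc l1 l2,
            d * ((∫ y in l1..l2, J (x - y) * U l1 l2 y) - U l1 l2 x) + f (U l1 l2 x) = 0) ∧
          (∀ w : ℝ → ℝ, ContinuousOn w (Set.Icc l1 l2) → (∀ x ∈ Set.Icc l1 l2, 0 < w x) →
            (∀ x ∈ Set.Icc l1 l2,
              d * ((∫ y in l1..l2, J (x - y) * w y) - w x) + f (w x) = 0) →
            ∀ x ∈ Set.Icc l1 l2, w x = U l1 l2 x)) →
        (∀ l1 l2 l1' l2' : ℝ, L < l2 - l1 → L < l2' - l1' → l1' ≤ l1 → l2 ≤ l2' →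
          ∀ x ∈ Set.Icc l1 l2, U l1 l2 x ≤ U l1' l2' x) →
        ∀ ε > 0, ∀ A > 0, ∃ R > 0, ∀ l1 l2 : ℝ, l1 < -R → R < l2 →
          ∀ x ∈ Set.Icc (-A) A, |U l1 l2 x - v0| < ε := by
  obtain ⟨L, hL, hlam⟩ := exists_forall_lambdaP_pos hJc hJnn hJeven hJint hJ1 hd hfp0pos
  refine ⟨L, hL, hlam, fun U hU hmono => ?_⟩
  have hshift : IsShiftInvariant L U := by
    intro l1 l2 b hl
    obtain ⟨hc, hpos, hsol, -⟩ := hU (l1 + b) (l2 + b) (by linarith)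
    exact shift_eq_of_unique hc (fun x hx => (hpos x hx).1) hsol (hU l1 l2 hl).2.2.2
  have hlong : ∀ᶠ r in atTop, L < r - -r := by
    filter_upwards [eventually_gt_atTop L] with r hr
    linarith
  obtain ⟨v, hv, hle⟩ := exists_tendsto_centered hL.le hshift hmono
    (fun r hr => ((hU (-r) r (by linarith)).2.1 0 ⟨by linarith, by linarith⟩).2)
  have hvpos : 0 < v :=
    ((hU (-L) L (by linarith)).2.1 0 ⟨by linarith, hL.le⟩).1.trans_le (hle L (by linarith))
  have hfv : f v = 0 := map_eq_zero_of_tendsto_isSteadyState hJint hJ1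
    (hfc.continuousAt (Ici_mem_nhds hvpos)) hK0.le
    (hlong.mono fun r hr => (hU _ _ hr).2.2.1) (hlong.mono fun r hr => (hU _ _ hr).1)
    (hlong.mono fun r hr y hy => abs_le.2 ⟨by linarith [((hU _ _ hr).2.1 y hy).1],
      ((hU _ _ hr).2.1 y hy).2⟩)
    (tendsto_apply_of_tendsto_centered hL.le hshift hmono hv)
  obtain rfl := hv0uniq v hvpos hfv
  exact exists_forall_abs_sub_lt_of_tendsto_centered hL.le hshift hmono hv

/-- **Convergence of steady states on expanding intervals**
(Proposition 3.6 of Cao–Du–Li–Li). -/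
theorem steady_states_converge_on_expanding_intervals
    (J : ℝ → ℝ) (hJc : Continuous J) (hJnn : ∀ x, 0 ≤ J x)
    (hJeven : ∀ x, J (-x) = J x) (hJbdd : BddAbove (Set.range J))
    (hJ0 : 0 < J 0) (hJint : Integrable J) (hJ1 : (∫ x, J x) = 1)
    (d : ℝ) (hd : 0 < d)
    (f : ℝ → ℝ) (hfc : ContinuousOn f (Set.Ici 0)) (hf0 : f 0 = 0)
    (hfLip : ∀ L > 0, ∃ K > 0, ∀ u1 ∈ Set.Icc 0 L, ∀ u2 ∈ Set.Icc 0 L,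
      |f u1 - f u2| ≤ K * |u1 - u2|)
    (K0 : ℝ) (hK0 : 0 < K0) (hfneg : ∀ u, K0 ≤ u → f u < 0)
    (hfdec : StrictAntiOn (fun u => f u / u) (Set.Ioi 0))
    (fp0 : ℝ) (hfp0 : HasDerivWithinAt f fp0 (Set.Ici 0) 0) (hfp0pos : 0 < fp0)
    (v0 : ℝ) (hv0pos : 0 < v0) (hv0zero : f v0 = 0)
    (hv0uniq : ∀ v, 0 < v → f v = 0 → v = v0) :
    ∃ L > 0,
      (∀ l1 l2 : ℝ, L < l2 - l1 → 0 < lambdaP d J l1 l2 fp0) ∧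
      ∀ U : ℝ → ℝ → ℝ → ℝ,
        (∀ l1 l2 : ℝ, L < l2 - l1 →
          ContinuousOn (U l1 l2) (Set.Icc l1 l2) ∧
          (∀ x ∈ Set.Icc l1 l2, 0 < U l1 l2 x ∧ U l1 l2 x ≤ K0) ∧
          (∀ x ∈ Set.Icc l1 l2,
            d * ((∫ y in l1..l2, J (x - y) * U l1 l2 y) - U l1 l2 x) + f (U l1 l2 x) = 0) ∧
          (∀ w : ℝ → ℝ, ContinuousOn w (Set.Icc l1 l2) → (∀ x ∈ Set.Icc l1 l2, 0 < w x) →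
            (∀ x ∈ Set.Icc l1 l2,
              d * ((∫ y in l1..l2, J (x - y) * w y) - w x) + f (w x) = 0) →
            ∀ x ∈ Set.Icc l1 l2, w x = U l1 l2 x)) →
        (∀ l1 l2 l1' l2' : ℝ, L < l2 - l1 → L < l2' - l1' → l1' ≤ l1 → l2 ≤ l2' →
          ∀ x ∈ Set.Icc l1 l2, U l1 l2 x ≤ U l1' l2' x) →
        ∀ ε > 0, ∀ A > 0, ∃ R > 0, ∀ l1 l2 : ℝ, l1 < -R → R < l2 →
          ∀ x ∈ Set.Icc (-A) A, |U l1 l2 x - v0| < ε :=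
  steady_states_converge_on_expanding_intervals_general J hJc hJnn hJeven hJint hJ1 d hd f hfc K0
    hK0 fp0 hfp0pos v0 hv0uniq
end
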